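/- arXiv:1612.07385 — 4 statements merged into one kernel-verified Lean document; each statement's English description precedes it below -/
import Mathlib

section
/- Let G be a finite group and f₁, f₂ : G → ℝ with ∑_{x∈G} f₁(x) = 0. Then ‖f₁ * f₂‖₂ ≤ ‖f₁‖₂ · (∑_{1≠ρ∈Ĝ} ‖f̂₂(ρ)‖_HS²)^{1/2}, where (f₁*f₂)(x) = ∑_{y∈G} f₁(xy⁻¹)f₂(y) and the sum runs over nontrivial irreducible unitary representations of G. -/
open Matrix BigOperators Finset
open scoped Classical

noncomputable section

/-- Squared Hilbert–Schmidt norm of a complex matrix: ‖M‖_HS² = tr(M*M). -/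
def HSnormSq {d : ℕ} (M : Matrix (Fin d) (Fin d) ℂ) : ℝ :=
  (Matrix.trace (Mᴴ * M)).re

/-- Fourier transform of `f : G → ℂ` at a unitary matrix representation `ρ`:
`f̂(ρ) = ∑_{x ∈ G} f x • ρ x`. -/
def FourierT {G : Type} [Group G] [Fintype G] (f : G → ℂ) {d : ℕ}
    (ρ : G →* Matrix.unitaryGroup (Fin d) ℂ) : Matrix (Fin d) (Fin d) ℂ :=
  ∑ x : G, f x • (ρ x : Matrix (Fin d) (Fin d) ℂ)

/-- A unitary matrix representation is irreducible if it is nonzero and the only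
invariant subspaces are `⊥` and `⊤`. -/
def IsIrreducibleRep {G : Type} [Group G] {d : ℕ}
    (ρ : G →* Matrix.unitaryGroup (Fin d) ℂ) : Prop :=
  0 < d ∧ ∀ W : Submodule ℂ (Fin d → ℂ),
    (∀ g : G, W.map (Matrix.toLin' (ρ g : Matrix (Fin d) (Fin d) ℂ)) ≤ W) → W = ⊥ ∨ W = ⊤

/-- A representation is nontrivial if it is not identically the identity. -/
def IsNontrivialRep {G : Type} [Group G] {d : ℕ}
    (ρ : G →* Matrix.unitaryGroup (Fin d) ℂ) : Prop :=
  ∃ g : G, ρ g ≠ 1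

/-- `G` is `D`-quasirandom: every nontrivial irreducible unitary representation
has degree at least `D`. -/
def IsQuasirandom (G : Type) [Group G] (D : ℕ) : Prop :=
  ∀ (n : ℕ) (ρ : G →* Matrix.unitaryGroup (Fin n) ℂ),
    IsIrreducibleRep ρ → IsNontrivialRep ρ → D ≤ n

/-- Convolution of real-valued functions on a finite group. -/
def conv {G : Type} [Group G] [Fintype G] (f₁ f₂ : G → ℝ) (x : G) : ℝ :=
  ∑ y : G, f₁ (x * y⁻¹) * f₂ y

section aux

variable {G : Type} [Group G] [Fintype G]

set_option linter.unusedSectionVars false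

lemma star_rho_coe {d : ℕ} (ρ : G →* Matrix.unitaryGroup (Fin d) ℂ) (g : G) :
    ((ρ g : Matrix (Fin d) (Fin d) ℂ))ᴴ = (ρ g⁻¹ : Matrix (Fin d) (Fin d) ℂ) := by
  rw [← Matrix.star_eq_conjTranspose, ← Matrix.UnitaryGroup.inv_val, ← map_inv]

/-- The averaged intertwiner. -/
def Mmat {d₁ d₂ : ℕ} (ρ₁ : G →* Matrix.unitaryGroup (Fin d₁) ℂ)
    (ρ₂ : G →* Matrix.unitaryGroup (Fin d₂) ℂ) (E : Matrix (Fin d₁) (Fin d₂) ℂ) :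
    Matrix (Fin d₁) (Fin d₂) ℂ :=
  ∑ x : G, (ρ₁ x : Matrix (Fin d₁) (Fin d₁) ℂ) * E * ((ρ₂ x : Matrix (Fin d₂) (Fin d₂) ℂ))ᴴ

lemma Mmat_intertwine {d₁ d₂ : ℕ} (ρ₁ : G →* Matrix.unitaryGroup (Fin d₁) ℂ)
    (ρ₂ : G →* Matrix.unitaryGroup (Fin d₂) ℂ) (E : Matrix (Fin d₁) (Fin d₂) ℂ) (g : G) :
    (ρ₁ g : Matrix (Fin d₁) (Fin d₁) ℂ) * Mmat ρ₁ ρ₂ E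
      = Mmat ρ₁ ρ₂ E * (ρ₂ g : Matrix (Fin d₂) (Fin d₂) ℂ) := by
  unfold Mmat
  rw [Matrix.mul_sum, Matrix.sum_mul]
  rw [← Equiv.sum_comp (Equiv.mulLeft g) (fun x => (ρ₁ x : Matrix (Fin d₁) (Fin d₁) ℂ) * E *
      ((ρ₂ x : Matrix (Fin d₂) (Fin d₂) ℂ))ᴴ * (ρ₂ g : Matrix (Fin d₂) (Fin d₂) ℂ))]
  refine Finset.sum_congr rfl fun x _ => ?_
  simp only [Equiv.coe_mulLeft]
  rw [star_rho_coe, star_rho_coe, _root_.mul_inv_rev, _root_.map_mul, _root_.map_mul,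
    Matrix.UnitaryGroup.mul_val, Matrix.UnitaryGroup.mul_val]
  have hc : ((ρ₂ g⁻¹ : Matrix (Fin d₂) (Fin d₂) ℂ)) * ((ρ₂ g : Matrix (Fin d₂) (Fin d₂) ℂ)) = 1 := by
    rw [← Matrix.UnitaryGroup.mul_val, ← _root_.map_mul, inv_mul_cancel, _root_.map_one,
      Matrix.UnitaryGroup.one_val]
  simp only [Matrix.mul_assoc, hc, Matrix.mul_one]

lemma schur_lemma {d : ℕ} (ρ : G →* Matrix.unitaryGroup (Fin d) ℂ)
    (h : IsIrreducibleRep ρ) (M : Matrix (Fin d) (Fin d) ℂ)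
    (hM : ∀ g : G, (ρ g : Matrix (Fin d) (Fin d) ℂ) * M = M * (ρ g : Matrix (Fin d) (Fin d) ℂ)) :
    M = (Matrix.trace M / (d : ℂ)) • 1 := by
  obtain ⟨hd, hW⟩ := h
  haveI : Nonempty (Fin d) := ⟨⟨0, hd⟩⟩
  obtain ⟨μ, hμ⟩ := Module.End.exists_eigenvalue (Matrix.toLin' M)
  have hinv : ∀ g : G, (Module.End.eigenspace (Matrix.toLin' M) μ).map
      (Matrix.toLin' (ρ g : Matrix (Fin d) (Fin d) ℂ)) ≤
      Module.End.eigenspace (Matrix.toLin' M) μ := by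
    rintro g v hv
    obtain ⟨w, hw, rfl⟩ := hv
    simp only [SetLike.mem_coe, Module.End.mem_eigenspace_iff] at hw ⊢
    rw [← LinearMap.comp_apply, ← Matrix.toLin'_mul, ← hM g, Matrix.toLin'_mul,
      LinearMap.comp_apply, hw, _root_.map_smul]
  rcases hW _ hinv with hbot | htop
  · exact absurd hbot hμ
  · have hMv : ∀ v : Fin d → ℂ, Matrix.toLin' M v = μ • v := by
      intro v
      have : v ∈ Module.End.eigenspace (Matrix.toLin' M) μ := htop ▸ Submodule.mem_top
      exact Module.End.mem_eigenspace_iff.mp this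
    have hM1 : M = μ • 1 := by
      ext a b
      have h2 := congrFun (hMv (Pi.single b 1)) a
      simp only [Matrix.toLin'_apply, Matrix.mulVec, dotProduct, Pi.smul_apply,
        Pi.single_apply, smul_eq_mul, mul_ite, mul_one, mul_zero] at h2
      simp only [Finset.sum_ite_eq', Finset.mem_univ, if_true] at h2
      simp [h2, Matrix.one_apply, Pi.single_apply, eq_comm]
    have htr : Matrix.trace M = μ * d := by
      rw [hM1, Matrix.trace_smul, Matrix.trace_one]
      simp [mul_comm]
    have hd0 : (d : ℂ) ≠ 0 := Nat.cast_ne_zero.mpr hd.ne'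
    rw [htr, hM1, mul_div_assoc, div_self hd0, mul_one]

lemma Mmat_std_apply {d₁ d₂ : ℕ} (ρ₁ : G →* Matrix.unitaryGroup (Fin d₁) ℂ)
    (ρ₂ : G →* Matrix.unitaryGroup (Fin d₂) ℂ) (b : Fin d₁) (e : Fin d₂)
    (a : Fin d₁) (c : Fin d₂) :
    Mmat ρ₁ ρ₂ (Matrix.single b e 1) a c
      = ∑ x : G, (ρ₁ x : Matrix (Fin d₁) (Fin d₁) ℂ) a b
          * (starRingEnd ℂ) ((ρ₂ x : Matrix (Fin d₂) (Fin d₂) ℂ) c e) := by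
  unfold Mmat
  rw [Matrix.sum_apply]
  refine Finset.sum_congr rfl fun x _ => ?_
  rw [Matrix.mul_apply]
  simp only [Matrix.conjTranspose_apply]
  rw [Finset.sum_eq_single e]
  · rw [Matrix.mul_apply, Finset.sum_eq_single b]
    · simp [Matrix.single_apply_same]
    · intro p _ hp
      rw [show Matrix.single b e (1:ℂ) p e = 0 from
        Matrix.single_apply_of_ne _ _ _ _ _ (by tauto), mul_zero]
    · simp
  · intro q _ hq
    rw [Matrix.mul_apply, Finset.sum_eq_zero, zero_mul]
    intro p _
    rw [show Matrix.single b e (1:ℂ) p q = 0 from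
      Matrix.single_apply_of_ne _ _ _ _ _ (by tauto), mul_zero]
  · simp

lemma trace_Mmat_std {dd : ℕ} (ρ : G →* Matrix.unitaryGroup (Fin dd) ℂ) (b e : Fin dd) :
    Matrix.trace (Mmat ρ ρ (Matrix.single b e 1))
      = (if b = e then (Fintype.card G : ℂ) else 0) := by
  unfold Mmat
  rw [Matrix.trace_sum]
  have : ∀ x : G, Matrix.trace ((ρ x : Matrix (Fin dd) (Fin dd) ℂ) *
      Matrix.single b e 1 * ((ρ x : Matrix (Fin dd) (Fin dd) ℂ))ᴴ)
      = (if b = e then (1:ℂ) else 0) := by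
    intro x
    rw [Matrix.trace_mul_cycle, ← Matrix.star_eq_conjTranspose,
      Matrix.UnitaryGroup.star_mul_self, Matrix.one_mul]
    by_cases h : b = e
    · subst h
      rw [Matrix.trace, Matrix.diag_single_same]
      simp [Pi.single_apply]
    · simp only [h, if_false]
      rw [Matrix.trace]
      apply Finset.sum_eq_zero
      intro i _
      exact Matrix.single_apply_of_ne _ _ _ _ _
        (by rintro ⟨rfl, rfl⟩; exact h rfl)
  rw [Finset.sum_congr rfl (fun x _ => this x)]
  simp [Finset.card_univ]

lemma schur_orth_mixed {d₁ d₂ : ℕ} (ρ₁ : G →* Matrix.unitaryGroup (Fin d₁) ℂ)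
    (ρ₂ : G →* Matrix.unitaryGroup (Fin d₂) ℂ)
    (hd : ∀ M : Matrix (Fin d₁) (Fin d₂) ℂ,
      (∀ g : G, (ρ₁ g : Matrix (Fin d₁) (Fin d₁) ℂ) * M
        = M * (ρ₂ g : Matrix (Fin d₂) (Fin d₂) ℂ)) → M = 0)
    (a b : Fin d₁) (c e : Fin d₂) :
    ∑ x : G, (ρ₁ x : Matrix (Fin d₁) (Fin d₁) ℂ) a b
      * (starRingEnd ℂ) ((ρ₂ x : Matrix (Fin d₂) (Fin d₂) ℂ) c e) = 0 := by
  have h0 := hd _ (Mmat_intertwine ρ₁ ρ₂ (Matrix.single b e 1))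
  have h1 := congrFun (congrFun h0 a) c
  rw [Mmat_std_apply] at h1
  simpa using h1

lemma schur_orth_same {dd : ℕ} (ρ : G →* Matrix.unitaryGroup (Fin dd) ℂ)
    (h : IsIrreducibleRep ρ) (a b c e : Fin dd) :
    ∑ x : G, (ρ x : Matrix (Fin dd) (Fin dd) ℂ) a b
      * (starRingEnd ℂ) ((ρ x : Matrix (Fin dd) (Fin dd) ℂ) c e)
      = (if a = c then 1 else 0) * (if b = e then 1 else 0) * ((Fintype.card G : ℂ) / dd) := by
  have h1 := schur_lemma ρ h _ (Mmat_intertwine ρ ρ (Matrix.single b e 1))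
  have h2 := congrFun (congrFun h1 a) c
  rw [Mmat_std_apply, trace_Mmat_std] at h2
  rw [h2]
  by_cases hac : a = c <;> by_cases hbe : b = e <;>
    simp [hac, hbe, Matrix.smul_apply, Matrix.one_apply, div_eq_mul_inv, mul_comm]

lemma FourierT_apply (f : G → ℂ) {dd : ℕ} (ρ : G →* Matrix.unitaryGroup (Fin dd) ℂ)
    (a b : Fin dd) :
    FourierT f ρ a b = ∑ x : G, f x * (ρ x : Matrix (Fin dd) (Fin dd) ℂ) a b := by
  unfold FourierT
  rw [Matrix.sum_apply]
  simp [Matrix.smul_apply]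

lemma eucl_inner (v w : EuclideanSpace ℂ G) :
    (inner ℂ v w : ℂ) = ∑ x : G, (starRingEnd ℂ) (v x) * w x := by
  simp [PiLp.inner_apply, RCLike.inner_apply, mul_comm]

section main

variable (ι : Type) [Fintype ι] (d : ι → ℕ) (ρ : ∀ i, G →* Matrix.unitaryGroup (Fin (d i)) ℂ)

def eFam (j : Σ i : ι, Fin (d i) × Fin (d i)) : EuclideanSpace ℂ G :=
  WithLp.toLp 2 fun x => (Real.sqrt (d j.1 / Fintype.card G) : ℂ)
    * (ρ j.1 x : Matrix (Fin (d j.1)) (Fin (d j.1)) ℂ) j.2.1 j.2.2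

variable {ι d ρ}

lemma eFam_orthonormal (hirr : ∀ i, IsIrreducibleRep (ρ i))
    (hdisj : ∀ i j, i ≠ j → ∀ M : Matrix (Fin (d i)) (Fin (d j)) ℂ,
      (∀ g : G, (ρ i g : Matrix (Fin (d i)) (Fin (d i)) ℂ) * M
          = M * (ρ j g : Matrix (Fin (d j)) (Fin (d j)) ℂ)) → M = 0) :
    Orthonormal ℂ (eFam ι d ρ) := by
  rw [orthonormal_iff_ite]
  rintro ⟨i, a, b⟩ ⟨i', c, e⟩
  rw [eucl_inner]
  simp only [eFam]
  have hsum : ∑ x : G, (starRingEnd ℂ) ((Real.sqrt (d i / Fintype.card G) : ℂ)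
        * (ρ i x : Matrix (Fin (d i)) (Fin (d i)) ℂ) a b)
        * ((Real.sqrt (d i' / Fintype.card G) : ℂ)
        * (ρ i' x : Matrix (Fin (d i')) (Fin (d i')) ℂ) c e)
      = ((Real.sqrt (d i / Fintype.card G) : ℂ) * (Real.sqrt (d i' / Fintype.card G) : ℂ))
        * (starRingEnd ℂ) (∑ x : G, (ρ i x : Matrix (Fin (d i)) (Fin (d i)) ℂ) a b
            * (starRingEnd ℂ) ((ρ i' x : Matrix (Fin (d i')) (Fin (d i')) ℂ) c e)) := by
    rw [map_sum, Finset.mul_sum]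
    refine Finset.sum_congr rfl fun x _ => ?_
    simp only [_root_.map_mul, Complex.conj_conj, Complex.conj_ofReal]
    ring
  rw [hsum]
  by_cases hii : i = i'
  · subst hii
    rw [schur_orth_same (ρ i) (hirr i) a b c e]
    have hN : (0:ℝ) < Fintype.card G := by exact_mod_cast Fintype.card_pos
    have hd0 : (0:ℝ) < d i := by exact_mod_cast (hirr i).1
    by_cases hac : a = c <;> by_cases hbe : b = e <;>
      simp only [hac, hbe, if_true, if_false, Sigma.mk.inj_iff, heq_eq_eq, Prod.mk.injEq,
        and_true, and_false, true_and, one_mul, zero_mul, mul_zero, map_zero, if_neg,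
        not_false_iff]
    · have hdc : (d i : ℂ) ≠ 0 := Nat.cast_ne_zero.mpr (hirr i).1.ne'
      have hNc : (Fintype.card G : ℂ) ≠ 0 := Nat.cast_ne_zero.mpr Fintype.card_ne_zero
      rw [← Complex.ofReal_mul, Real.mul_self_sqrt (by positivity)]
      rw [map_div₀, Complex.conj_natCast, Complex.conj_natCast, Complex.ofReal_div,
        Complex.ofReal_natCast, Complex.ofReal_natCast]
      field_simp
    all_goals simp
  · rw [schur_orth_mixed (ρ i) (ρ i') (hdisj i i' hii) a b c e]
    simp [Sigma.mk.inj_iff, hii]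

lemma HSnormSq_eq {dd : ℕ} (M : Matrix (Fin dd) (Fin dd) ℂ) :
    HSnormSq M = ∑ a : Fin dd, ∑ b : Fin dd, Complex.normSq (M a b) := by
  unfold HSnormSq
  rw [Matrix.trace]
  have h1 : ∀ j, (Mᴴ * M).diag j = ((∑ a, Complex.normSq (M a j) : ℝ) : ℂ) := by
    intro j
    rw [Matrix.diag_apply, Matrix.mul_apply, Complex.ofReal_sum]
    refine Finset.sum_congr rfl fun a _ => ?_
    rw [Matrix.conjTranspose_apply, mul_comm, Complex.star_def, Complex.mul_conj]
  rw [Finset.sum_congr rfl fun j _ => h1 j, ← Complex.ofReal_sum, Complex.ofReal_re,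
    Finset.sum_comm]

lemma HSnormSq_nonneg {dd : ℕ} (M : Matrix (Fin dd) (Fin dd) ℂ) : 0 ≤ HSnormSq M := by
  rw [HSnormSq_eq]
  exact Finset.sum_nonneg fun a _ => Finset.sum_nonneg fun b _ => Complex.normSq_nonneg _

lemma card_J {ι : Type} [Fintype ι] {d : ι → ℕ} (hcomp : ∑ i : ι, (d i)^2 = Fintype.card G) :
    Fintype.card (Σ i : ι, Fin (d i) × Fin (d i)) = Fintype.card G := by
  rw [Fintype.card_sigma, ← hcomp]
  refine Finset.sum_congr rfl fun i _ => ?_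
  simp [sq]

lemma plancherel (hirr : ∀ i, IsIrreducibleRep (ρ i))
    (hdisj : ∀ i j, i ≠ j → ∀ M : Matrix (Fin (d i)) (Fin (d j)) ℂ,
      (∀ g : G, (ρ i g : Matrix (Fin (d i)) (Fin (d i)) ℂ) * M
          = M * (ρ j g : Matrix (Fin (d j)) (Fin (d j)) ℂ)) → M = 0)
    (hcomp : ∑ i : ι, (d i)^2 = Fintype.card G) (f : G → ℝ) :
    ∑ x : G, (f x)^2 = ∑ i : ι, ((d i : ℝ) / Fintype.card G)
      * HSnormSq (FourierT (fun x => (f x : ℂ)) (ρ i)) := by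
  haveI hne : Nonempty (Σ i : ι, Fin (d i) × Fin (d i)) := by
    rw [← Fintype.card_pos_iff, card_J hcomp]
    exact Fintype.card_pos
  have hon := eFam_orthonormal hirr hdisj
  have hcard : Fintype.card (Σ i : ι, Fin (d i) × Fin (d i))
      = Module.finrank ℂ (EuclideanSpace ℂ G) := by
    rw [finrank_euclideanSpace, card_J hcomp]
  have hcoe : ⇑(basisOfOrthonormalOfCardEqFinrank hon hcard) = eFam ι d ρ :=
    coe_basisOfOrthonormalOfCardEqFinrank hon hcard
  set B : OrthonormalBasis (Σ i : ι, Fin (d i) × Fin (d i)) ℂ (EuclideanSpace ℂ G) :=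
    (basisOfOrthonormalOfCardEqFinrank hon hcard).toOrthonormalBasis (by rwa [hcoe]) with hB
  have hBcoe : ⇑B = eFam ι d ρ := by
    rw [hB, Module.Basis.coe_toOrthonormalBasis, hcoe]
  set F : EuclideanSpace ℂ G := WithLp.toLp 2 fun x => (f x : ℂ) with hF
  have key := B.sum_inner_mul_inner F F
  have hFB : ∀ j : Σ i : ι, Fin (d i) × Fin (d i),
      (inner ℂ F (B j) : ℂ) = (Real.sqrt (d j.1 / Fintype.card G) : ℂ)
        * FourierT (fun x => (f x : ℂ)) (ρ j.1) j.2.1 j.2.2 := by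
    intro j
    rw [eucl_inner, hBcoe, FourierT_apply, Finset.mul_sum]
    refine Finset.sum_congr rfl fun x _ => ?_
    simp only [eFam, hF]
    rw [Complex.conj_ofReal]
    ring
  have hterm : ∀ j : Σ i : ι, Fin (d i) × Fin (d i),
      (inner ℂ F (B j) : ℂ) * (inner ℂ (B j) F : ℂ)
        = (((d j.1 : ℝ) / Fintype.card G
            * Complex.normSq (FourierT (fun x => (f x : ℂ)) (ρ j.1) j.2.1 j.2.2) : ℝ) : ℂ) := by
    intro j
    rw [← inner_conj_symm (B j) F, Complex.mul_conj, hFB j, Complex.normSq_mul,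
      Complex.normSq_ofReal, Real.mul_self_sqrt (by positivity)]
  have hFF : (inner ℂ F F : ℂ) = ((∑ x : G, (f x)^2 : ℝ) : ℂ) := by
    rw [eucl_inner, Complex.ofReal_sum]
    refine Finset.sum_congr rfl fun x _ => ?_
    simp only [hF]
    rw [Complex.conj_ofReal, ← Complex.ofReal_mul, sq]
  rw [hFF, Finset.sum_congr rfl fun j _ => hterm j, ← Complex.ofReal_sum] at key
  have key2 := Complex.ofReal_injective key
  rw [← key2, ← Finset.univ_sigma_univ, Finset.sum_sigma]
  refine Finset.sum_congr rfl fun i _ => ?_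
  rw [HSnormSq_eq]
  simp only [Fintype.sum_prod_type, Finset.mul_sum]

lemma fourier_conv (f₁ f₂ : G → ℝ) {dd : ℕ} (ρ : G →* Matrix.unitaryGroup (Fin dd) ℂ) :
    FourierT (fun x => ((conv f₁ f₂ x : ℝ) : ℂ)) ρ
      = FourierT (fun x => (f₁ x : ℂ)) ρ * FourierT (fun x => (f₂ x : ℂ)) ρ := by
  unfold FourierT conv
  rw [Finset.sum_mul_sum]
  rw [Finset.sum_comm]
  calc (∑ x : G, ((∑ y : G, f₁ (x * y⁻¹) * f₂ y : ℝ) : ℂ) • (ρ x : Matrix (Fin dd) (Fin dd) ℂ))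
      = ∑ y : G, ∑ x : G, ((f₁ (x * y⁻¹) : ℂ) * (f₂ y : ℂ))
          • (ρ x : Matrix (Fin dd) (Fin dd) ℂ) := by
        rw [Finset.sum_comm]
        refine Finset.sum_congr rfl fun x _ => ?_
        rw [Complex.ofReal_sum, Finset.sum_smul]
        refine Finset.sum_congr rfl fun y _ => ?_
        rw [Complex.ofReal_mul]
    _ = ∑ y : G, ∑ z : G, ((f₁ z : ℂ) * (f₂ y : ℂ))
          • ((ρ z : Matrix (Fin dd) (Fin dd) ℂ) * (ρ y : Matrix (Fin dd) (Fin dd) ℂ)) := by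
        refine Finset.sum_congr rfl fun y _ => ?_
        rw [← Equiv.sum_comp (Equiv.mulRight y) (fun x => ((f₁ (x * y⁻¹) : ℂ) * (f₂ y : ℂ))
          • (ρ x : Matrix (Fin dd) (Fin dd) ℂ))]
        refine Finset.sum_congr rfl fun z _ => ?_
        simp only [Equiv.coe_mulRight]
        rw [mul_inv_cancel_right, _root_.map_mul, Matrix.UnitaryGroup.mul_val]
    _ = ∑ y : G, ∑ z : G, ((f₁ z : ℂ) • (ρ z : Matrix (Fin dd) (Fin dd) ℂ))
          * ((f₂ y : ℂ) • (ρ y : Matrix (Fin dd) (Fin dd) ℂ)) := by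
        refine Finset.sum_congr rfl fun y _ => Finset.sum_congr rfl fun z _ => ?_
        rw [Matrix.smul_mul, Matrix.mul_smul, smul_smul]

lemma fourier_trivial (f : G → ℝ) (hmean : ∑ x : G, f x = 0) {dd : ℕ}
    (ρ : G →* Matrix.unitaryGroup (Fin dd) ℂ) (htriv : ∀ g : G, ρ g = 1) :
    FourierT (fun x => (f x : ℂ)) ρ = 0 := by
  unfold FourierT
  have h1 : ∀ x : G, (f x : ℂ) • (ρ x : Matrix (Fin dd) (Fin dd) ℂ)
      = (f x : ℂ) • (1 : Matrix (Fin dd) (Fin dd) ℂ) := by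
    intro x
    rw [htriv x, Matrix.UnitaryGroup.one_val]
  rw [Finset.sum_congr rfl fun x _ => h1 x, ← Finset.sum_smul,
    show (∑ x : G, (f x : ℂ)) = 0 by rw [← Complex.ofReal_sum, hmean, Complex.ofReal_zero],
    zero_smul]

lemma HSnormSq_mul_le {dd : ℕ} (A B : Matrix (Fin dd) (Fin dd) ℂ) :
    HSnormSq (A * B) ≤ HSnormSq A * HSnormSq B := by
  rw [HSnormSq_eq, HSnormSq_eq, HSnormSq_eq,
    show (∑ a, ∑ b, Complex.normSq (B a b)) = ∑ c, ∑ b, Complex.normSq (B b c) from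
      Finset.sum_comm,
    Finset.sum_mul_sum]
  refine Finset.sum_le_sum fun a _ => Finset.sum_le_sum fun c _ => ?_
  rw [Matrix.mul_apply]
  calc Complex.normSq (∑ b, A a b * B b c)
      = ‖∑ b, A a b * B b c‖ ^ 2 := by rw [Complex.sq_norm]
    _ ≤ (∑ b, ‖A a b‖ * ‖B b c‖) ^ 2 := by
        have hn : ‖∑ b, A a b * B b c‖ ≤ ∑ b, ‖A a b‖ * ‖B b c‖ := by
          refine (norm_sum_le _ _).trans ?_
          refine Finset.sum_le_sum fun b _ => ?_
          rw [norm_mul]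
        exact pow_le_pow_left₀ (norm_nonneg _) hn 2
    _ ≤ (∑ b, ‖A a b‖ ^ 2) * (∑ b, ‖B b c‖ ^ 2) :=
        Finset.sum_mul_sq_le_sq_mul_sq Finset.univ _ _
    _ = (∑ b, Complex.normSq (A a b)) * (∑ b, Complex.normSq (B b c)) := by
        congr 1 <;> refine Finset.sum_congr rfl fun b _ => ?_ <;>
          rw [Complex.sq_norm]

end main


end aux

theorem stmt2 {G : Type} [Group G] [Fintype G] (f₁ f₂ : G → ℝ)
    (hmean : ∑ x : G, f₁ x = 0)
    (ι : Type) [Fintype ι] (d : ι → ℕ)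
    (ρ : ∀ i, G →* Matrix.unitaryGroup (Fin (d i)) ℂ)
    (hirr : ∀ i, IsIrreducibleRep (ρ i))
    (hdisj : ∀ i j, i ≠ j → ∀ M : Matrix (Fin (d i)) (Fin (d j)) ℂ,
      (∀ g : G, (ρ i g : Matrix (Fin (d i)) (Fin (d i)) ℂ) * M
          = M * (ρ j g : Matrix (Fin (d j)) (Fin (d j)) ℂ)) → M = 0)
    (hcomp : ∑ i : ι, (d i) ^ 2 = Fintype.card G) :
    Real.sqrt (∑ x : G, conv f₁ f₂ x ^ 2) ≤
      Real.sqrt (∑ x : G, f₁ x ^ 2) *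
        Real.sqrt (∑ i ∈ Finset.univ.filter (fun i => IsNontrivialRep (ρ i)),
          HSnormSq (FourierT (fun x => (f₂ x : ℂ)) (ρ i))) := by
  classical
  set N := (Fintype.card G : ℝ) with hN
  set FT1 := fun i => FourierT (fun x => (f₁ x : ℂ)) (ρ i) with hFT1
  set FT2 := fun i => FourierT (fun x => (f₂ x : ℂ)) (ρ i) with hFT2
  set A := ∑ x : G, f₁ x ^ 2 with hA
  have hAnn : 0 ≤ A := Finset.sum_nonneg fun x _ => sq_nonneg _
  have h1 : ∑ x : G, conv f₁ f₂ x ^ 2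
      = ∑ i : ι, ((d i : ℝ) / N) * HSnormSq (FT1 i * FT2 i) := by
    rw [plancherel hirr hdisj hcomp (conv f₁ f₂)]
    exact Finset.sum_congr rfl fun i _ => by rw [fourier_conv f₁ f₂ (ρ i)]
  have hbound : ∀ i, ((d i : ℝ) / N) * HSnormSq (FT1 i) ≤ A := by
    intro i
    rw [hA, plancherel hirr hdisj hcomp f₁]
    exact Finset.single_le_sum
      (f := fun j => ((d j : ℝ) / N) * HSnormSq (FourierT (fun x => ((f₁ x : ℝ) : ℂ)) (ρ j)))
      (fun j _ => mul_nonneg (by positivity) (HSnormSq_nonneg _)) (Finset.mem_univ i)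
  have hzero : ∀ i, ¬ IsNontrivialRep (ρ i)
      → ((d i : ℝ) / N) * HSnormSq (FT1 i * FT2 i) = 0 := by
    intro i hi
    simp only [IsNontrivialRep, not_exists, not_not] at hi
    have hz : FT1 i = 0 := fourier_trivial f₁ hmean (ρ i) hi
    rw [hz, Matrix.zero_mul, show HSnormSq (0 : Matrix (Fin (d i)) (Fin (d i)) ℂ) = 0 by
      rw [HSnormSq_eq]; simp, mul_zero]
  have h2 : ∑ i : ι, ((d i : ℝ) / N) * HSnormSq (FT1 i * FT2 i)
      = ∑ i ∈ Finset.univ.filter (fun i => IsNontrivialRep (ρ i)),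
          ((d i : ℝ) / N) * HSnormSq (FT1 i * FT2 i) :=
    (Finset.sum_filter_of_ne
      (p := fun i => IsNontrivialRep (ρ i))
      (f := fun i => ((d i : ℝ) / N) * HSnormSq (FT1 i * FT2 i))
      (fun i _ h => by
        by_contra hn
        exact h (hzero i hn))).symm
  have h3 : ∑ i ∈ Finset.univ.filter (fun i => IsNontrivialRep (ρ i)),
        ((d i : ℝ) / N) * HSnormSq (FT1 i * FT2 i)
      ≤ ∑ i ∈ Finset.univ.filter (fun i => IsNontrivialRep (ρ i)),
          A * HSnormSq (FT2 i) := by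
    refine Finset.sum_le_sum fun i _ => ?_
    calc ((d i : ℝ) / N) * HSnormSq (FT1 i * FT2 i)
        ≤ ((d i : ℝ) / N) * (HSnormSq (FT1 i) * HSnormSq (FT2 i)) :=
          mul_le_mul_of_nonneg_left (HSnormSq_mul_le _ _) (by positivity)
      _ = (((d i : ℝ) / N) * HSnormSq (FT1 i)) * HSnormSq (FT2 i) := by ring
      _ ≤ A * HSnormSq (FT2 i) :=
          mul_le_mul_of_nonneg_right (hbound i) (HSnormSq_nonneg _)
  have hmain : ∑ x : G, conv f₁ f₂ x ^ 2
      ≤ A * ∑ i ∈ Finset.univ.filter (fun i => IsNontrivialRep (ρ i)),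
          HSnormSq (FT2 i) := by
    rw [h1, h2, Finset.mul_sum]
    exact h3
  have hfin := Real.sqrt_le_sqrt hmain
  rwa [Real.sqrt_mul hAnn] at hfin
end
end

section
/- Babai–Nikolov–Pyber inequality: Let G be a D-quasirandom finite group (every nontrivial irreducible representation has degree at least D) and f₁, f₂ : G → ℝ with ∑_x f₁(x) = 0. Then ‖f₁*f₂‖₂ ≤ (|G|/D)^{1/2} ‖f₁‖₂ ‖f₂‖₂. -/
open Matrix BigOperators Finset
open scoped Classical ComplexConjugate InnerProductSpace

noncomputable section

namespace BNP

variable {G : Type} [Group G] [Fintype G]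

abbrev V (G : Type) [Group G] [Fintype G] := EuclideanSpace ℂ G

/-- convolution operator -/
def T (f₁ : G → ℝ) : V G →ₗ[ℂ] V G where
  toFun v := WithLp.toLp 2 (fun x => ∑ y : G, (f₁ (x * y⁻¹) : ℂ) * v y)
  map_add' u v := by ext x; simp [mul_add, Finset.sum_add_distrib]
  map_smul' c v := by ext x; simp [Finset.mul_sum]; ring_nf; simp [mul_comm, mul_left_comm]

def Tstar (f₁ : G → ℝ) : V G →ₗ[ℂ] V G where
  toFun v := WithLp.toLp 2 (fun y => ∑ x : G, (f₁ (x * y⁻¹) : ℂ) * v x)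
  map_add' u v := by ext x; simp [mul_add, Finset.sum_add_distrib]
  map_smul' c v := by ext x; simp [Finset.mul_sum]; ring_nf; simp [mul_comm, mul_left_comm]

lemma T_apply (f₁ : G → ℝ) (v : V G) (x : G) : T f₁ v x = ∑ y : G, (f₁ (x * y⁻¹) : ℂ) * v y := rfl
lemma Tstar_apply (f₁ : G → ℝ) (v : V G) (y : G) :
    Tstar f₁ v y = ∑ x : G, (f₁ (x * y⁻¹) : ℂ) * v x := rfl

lemma adj (f₁ : G → ℝ) (u v : V G) : ⟪Tstar f₁ u, v⟫_ℂ = ⟪u, T f₁ v⟫_ℂ := by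
  simp only [PiLp.inner_apply, T_apply, Tstar_apply, RCLike.inner_apply, map_sum,
    Finset.sum_mul, Finset.mul_sum, _root_.map_mul, Complex.conj_ofReal]
  rw [Finset.sum_comm]
  congr 1; ext x; congr 1; ext y; ring

end BNP

namespace BNP
variable {G : Type} [Group G] [Fintype G]

/-- right translation -/
def R (g : G) : V G →ₗ[ℂ] V G where
  toFun v := WithLp.toLp 2 (fun x => v (x * g))
  map_add' u v := rfl
  map_smul' c v := rfl

lemma R_apply (g : G) (v : V G) (x : G) : R g v x = v (x * g) := rfl

lemma R_comp (g h : G) (v : V G) : R g (R h v) = R (g * h) v := by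
  ext x; exact congrArg v (mul_assoc x g h)

lemma R_inner (g : G) (u v : V G) : ⟪R g u, R g v⟫_ℂ = ⟪u, v⟫_ℂ := by
  simp only [PiLp.inner_apply, R_apply]
  exact Fintype.sum_bijective (fun x => x * g) (Group.mulRight_bijective g) _ _ (fun x => rfl)

lemma T_comm_R (f₁ : G → ℝ) (g : G) (v : V G) : T f₁ (R g v) = R g (T f₁ v) := by
  ext x
  simp only [T_apply, R_apply]
  exact Fintype.sum_bijective (fun y => y * g) (Group.mulRight_bijective g) _ _
    (fun y => by simp [_root_.mul_inv_rev, mul_assoc, mul_inv_cancel_left])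

lemma Tstar_comm_R (f₁ : G → ℝ) (g : G) (v : V G) : Tstar f₁ (R g v) = R g (Tstar f₁ v) := by
  ext y
  simp only [Tstar_apply, R_apply]
  exact Fintype.sum_bijective (fun x => x * g) (Group.mulRight_bijective g) _ _
    (fun x => by simp [_root_.mul_inv_rev, mul_assoc, mul_inv_cancel_left])

def S (f₁ : G → ℝ) : V G →ₗ[ℂ] V G := (Tstar f₁).comp (T f₁)

lemma adj2 (f₁ : G → ℝ) (u v : V G) : ⟪T f₁ u, v⟫_ℂ = ⟪u, Tstar f₁ v⟫_ℂ := by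
  rw [← inner_conj_symm, ← adj, inner_conj_symm]

lemma S_symm (f₁ : G → ℝ) : (S f₁).IsSymmetric := by
  intro u v
  calc ⟪S f₁ u, v⟫_ℂ = ⟪T f₁ u, T f₁ v⟫_ℂ := adj f₁ (T f₁ u) v
    _ = ⟪u, S f₁ v⟫_ℂ := adj2 f₁ u (T f₁ v)

lemma inner_S_self (f₁ : G → ℝ) (v : V G) : ⟪v, S f₁ v⟫_ℂ = (‖T f₁ v‖ : ℂ) ^ 2 := by
  rw [S, LinearMap.comp_apply, ← adj2, inner_self_eq_norm_sq_to_K]; norm_cast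

end BNP

namespace BNP
variable {G : Type} [Group G] [Fintype G]

lemma hn : Module.finrank ℂ (V G) = Fintype.card G := finrank_euclideanSpace

def eb (f₁ : G → ℝ) : OrthonormalBasis (Fin (Fintype.card G)) ℂ (V G) :=
  (S_symm f₁).eigenvectorBasis hn

def ev (f₁ : G → ℝ) : Fin (Fintype.card G) → ℝ := (S_symm f₁).eigenvalues hn

lemma S_apply_eb (f₁ : G → ℝ) (i : Fin (Fintype.card G)) :
    S f₁ (eb f₁ i) = (ev f₁ i : ℂ) • eb f₁ i := (S_symm f₁).apply_eigenvectorBasis hn i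

lemma ev_eq (f₁ : G → ℝ) (i : Fin (Fintype.card G)) :
    (ev f₁ i : ℂ) = (‖T f₁ (eb f₁ i)‖ : ℂ) ^ 2 := by
  have h1 : ⟪eb f₁ i, S f₁ (eb f₁ i)⟫_ℂ = (ev f₁ i : ℂ) := by
    rw [S_apply_eb, inner_smul_right, inner_self_eq_norm_sq_to_K]
    simp [(eb f₁).orthonormal.1 i]
  rw [← h1, inner_S_self]

lemma ev_nonneg (f₁ : G → ℝ) (i : Fin (Fintype.card G)) : 0 ≤ ev f₁ i := by
  have := ev_eq f₁ i
  have h2 : (ev f₁ i : ℂ).re = ((‖T f₁ (eb f₁ i)‖ : ℂ) ^ 2).re := by rw [this]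
  simp only [Complex.ofReal_re] at h2
  rw [h2]
  norm_cast
  positivity

end BNP

namespace BNP
variable {G : Type} [Group G] [Fintype G]

lemma Tstar_single (f₁ : G → ℝ) (x y : G) :
    Tstar f₁ (EuclideanSpace.single x 1) y = (f₁ (x * y⁻¹) : ℂ) := by
  rw [Tstar_apply]
  rw [Finset.sum_eq_single x]
  · simp [EuclideanSpace.single_apply]
  · intro z _ hz; simp [EuclideanSpace.single_apply, hz]
  · simp

lemma norm_Tstar_single (f₁ : G → ℝ) (x : G) :
    ⟪Tstar f₁ (EuclideanSpace.single x 1), Tstar f₁ (EuclideanSpace.single x 1)⟫_ℂ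
      = ((∑ z : G, f₁ z ^ 2 : ℝ) : ℂ) := by
  simp only [PiLp.inner_apply, RCLike.inner_apply, Tstar_single, Complex.conj_ofReal]
  push_cast
  have bij : Function.Bijective (fun y : G => x * y⁻¹) := by
    constructor
    · intro a b hab; simpa using hab
    · intro z; exact ⟨z⁻¹ * x, by group⟩
  exact Fintype.sum_bijective _ bij _ _ (fun y => (sq ((f₁ (x * y⁻¹) : ℂ))).symm)

lemma sum_ev (f₁ : G → ℝ) :
    ∑ i, ev f₁ i = (Fintype.card G : ℝ) * ∑ z : G, f₁ z ^ 2 := by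
  have key : ∑ i, ((ev f₁ i : ℂ)) =
      ∑ x : G, ⟪Tstar f₁ (EuclideanSpace.single x 1), Tstar f₁ (EuclideanSpace.single x 1)⟫_ℂ := by
    have e := EuclideanSpace.basisFun G ℂ
    calc ∑ i, ((ev f₁ i : ℂ))
        = ∑ i, ⟪T f₁ (eb f₁ i), T f₁ (eb f₁ i)⟫_ℂ := by
          refine Finset.sum_congr rfl fun i _ => ?_
          rw [ev_eq, inner_self_eq_norm_sq_to_K]; norm_cast
      _ = ∑ i, ∑ x : G, ⟪T f₁ (eb f₁ i), EuclideanSpace.single x 1⟫_ℂ *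
            ⟪EuclideanSpace.single x 1, T f₁ (eb f₁ i)⟫_ℂ := by
          refine Finset.sum_congr rfl fun i _ => ?_
          rw [← (EuclideanSpace.basisFun G ℂ).sum_inner_mul_inner]
          refine Finset.sum_congr rfl fun x _ => ?_
          rw [EuclideanSpace.basisFun_apply]
      _ = ∑ x : G, ∑ i, ⟪Tstar f₁ (EuclideanSpace.single x 1), eb f₁ i⟫_ℂ *
            ⟪eb f₁ i, Tstar f₁ (EuclideanSpace.single x 1)⟫_ℂ := by
          rw [Finset.sum_comm]
          refine Finset.sum_congr rfl fun x _ => Finset.sum_congr rfl fun i _ => ?_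
          rw [adj2, ← inner_conj_symm (Tstar f₁ _) (eb f₁ i), ← adj2,
            inner_conj_symm]
          ring
      _ = ∑ x : G, ⟪Tstar f₁ (EuclideanSpace.single x 1), Tstar f₁ (EuclideanSpace.single x 1)⟫_ℂ := by
          refine Finset.sum_congr rfl fun x _ => ?_
          exact (eb f₁).sum_inner_mul_inner _ _
  rw [Finset.sum_congr rfl (fun x _ => norm_Tstar_single f₁ x), Finset.sum_const] at key
  have : ((∑ i, ev f₁ i : ℝ) : ℂ) = ((Fintype.card G : ℝ) * ∑ z : G, f₁ z ^ 2 : ℝ) := by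
    push_cast
    push_cast at key
    rw [key]; simp [nsmul_eq_mul]
  exact_mod_cast this

end BNP

namespace BNP
variable {G : Type} [Group G] [Fintype G]

lemma cardpos : 0 < Fintype.card G := @Fintype.card_pos G _ ⟨1⟩

def lam (f₁ : G → ℝ) : ℝ :=
  Finset.univ.sup' (by simpa using Finset.univ_nonempty_iff.2 ⟨(⟨0, cardpos⟩ : Fin (Fintype.card G))⟩) (ev f₁)

lemma ev_le_lam (f₁ : G → ℝ) (i : Fin (Fintype.card G)) : ev f₁ i ≤ lam f₁ :=
  Finset.le_sup' _ (Finset.mem_univ i)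

lemma lam_mem (f₁ : G → ℝ) : ∃ i, ev f₁ i = lam f₁ := by
  obtain ⟨i, -, h⟩ := Finset.exists_mem_eq_sup' (s := (Finset.univ : Finset (Fin (Fintype.card G))))
    (by simpa using Finset.univ_nonempty_iff.2 ⟨(⟨0, cardpos⟩ : Fin (Fintype.card G))⟩) (ev f₁)
  exact ⟨i, h.symm⟩

lemma normSq_T_eq (f₁ : G → ℝ) (v : V G) :
    (‖T f₁ v‖ : ℝ) ^ 2 = ∑ i, ev f₁ i * Complex.normSq ⟪eb f₁ i, v⟫_ℂ := by
  have hc : ⟪v, S f₁ v⟫_ℂ = ∑ i, ((ev f₁ i : ℂ)) * (Complex.normSq ⟪eb f₁ i, v⟫_ℂ : ℂ) := by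
    rw [← (eb f₁).sum_inner_mul_inner v (S f₁ v)]
    refine Finset.sum_congr rfl fun i _ => ?_
    rw [← S_symm f₁ (eb f₁ i) v, S_apply_eb, inner_smul_left, Complex.conj_ofReal]
    rw [← inner_conj_symm v (eb f₁ i)]
    rw [show (starRingEnd ℂ) ⟪eb f₁ i, v⟫_ℂ * ((ev f₁ i : ℂ) * ⟪eb f₁ i, v⟫_ℂ)
      = (ev f₁ i : ℂ) * (⟪eb f₁ i, v⟫_ℂ * (starRingEnd ℂ) ⟪eb f₁ i, v⟫_ℂ) by ring,
      Complex.mul_conj]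
  rw [inner_S_self] at hc
  have := congrArg Complex.re hc
  simpa [← Complex.ofReal_pow] using this

lemma normSq_eq (f₁ : G → ℝ) (v : V G) :
    (‖v‖ : ℝ) ^ 2 = ∑ i, Complex.normSq ⟪eb f₁ i, v⟫_ℂ := by
  have hc : ⟪v, v⟫_ℂ = ∑ i, (Complex.normSq ⟪eb f₁ i, v⟫_ℂ : ℂ) := by
    rw [← (eb f₁).sum_inner_mul_inner v v]
    refine Finset.sum_congr rfl fun i _ => ?_
    rw [← inner_conj_symm v (eb f₁ i), mul_comm, Complex.mul_conj]
  have := congrArg Complex.re hc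
  rw [← inner_self_eq_norm_sq (𝕜 := ℂ) v,
    show (RCLike.re ⟪v, v⟫_ℂ : ℝ) = (⟪v, v⟫_ℂ).re from rfl, this]
  simp

lemma norm_T_le (f₁ : G → ℝ) (v : V G) : ‖T f₁ v‖ ^ 2 ≤ lam f₁ * ‖v‖ ^ 2 := by
  rw [normSq_T_eq, normSq_eq f₁ v, Finset.mul_sum]
  refine Finset.sum_le_sum fun i _ => ?_
  exact mul_le_mul_of_nonneg_right (ev_le_lam f₁ i) (Complex.normSq_nonneg _)

end BNP

namespace BNP
variable {G : Type} [Group G] [Fintype G]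

def Esp (f₁ : G → ℝ) : Submodule ℂ (V G) := Module.End.eigenspace (S f₁) ((lam f₁ : ℂ))

lemma mem_Esp {f₁ : G → ℝ} {v : V G} : v ∈ Esp f₁ ↔ S f₁ v = (lam f₁ : ℂ) • v :=
  Module.End.mem_eigenspace_iff

/-- invariance of a submodule under all right translations -/
def Inv (W : Submodule ℂ (V G)) : Prop := ∀ (g : G) (v : V G), v ∈ W → R g v ∈ W

lemma inv_Esp (f₁ : G → ℝ) : Inv (Esp f₁) := by
  intro g v hv
  rw [mem_Esp] at hv ⊢
  have hSdef : ∀ w : V G, S f₁ w = Tstar f₁ (T f₁ w) := fun _ => rfl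
  rw [hSdef, T_comm_R, Tstar_comm_R, ← hSdef, hv, LinearMap.map_smul]

lemma eb_mem_Esp (f₁ : G → ℝ) {i : Fin (Fintype.card G)} (h : ev f₁ i = lam f₁) :
    eb f₁ i ∈ Esp f₁ := by
  rw [mem_Esp, S_apply_eb, h]

lemma Esp_ne_bot (f₁ : G → ℝ) : Esp f₁ ≠ ⊥ := by
  obtain ⟨i, hi⟩ := lam_mem f₁
  intro h
  have : eb f₁ i = 0 := by
    have := eb_mem_Esp f₁ hi
    rwa [h, Submodule.mem_bot] at this
  have h1 := (eb f₁).orthonormal.1 i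
  rw [this] at h1; simp at h1

lemma finrank_Esp_le (f₁ : G → ℝ) :
    Module.finrank ℂ (Esp f₁) ≤ (Finset.univ.filter (fun i => ev f₁ i = lam f₁)).card := by
  classical
  set s := Finset.univ.filter (fun i => ev f₁ i = lam f₁) with hs
  have hle : Esp f₁ ≤ Submodule.span ℂ ((s.image (eb f₁) : Finset (V G)) : Set (V G)) := by
    intro v hv
    rw [mem_Esp] at hv
    have hco : ∀ i, i ∉ s → ⟪eb f₁ i, v⟫_ℂ = 0 := by
      intro i hi
      have h1 : ⟪eb f₁ i, S f₁ v⟫_ℂ = (ev f₁ i : ℂ) * ⟪eb f₁ i, v⟫_ℂ := by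
        rw [← S_symm f₁ (eb f₁ i) v, S_apply_eb, inner_smul_left, Complex.conj_ofReal]
      rw [hv, inner_smul_right] at h1
      have hne : (ev f₁ i : ℂ) ≠ (lam f₁ : ℂ) := by
        simp only [Finset.mem_filter, Finset.mem_univ, true_and, hs] at hi
        exact_mod_cast hi
      have := sub_eq_zero.2 h1
      rw [← sub_mul] at this
      rcases mul_eq_zero.1 this with h | h
      · exact absurd (sub_eq_zero.1 h).symm hne
      · exact h
    have hrepr := (eb f₁).sum_repr' v
    rw [← hrepr]
    refine Submodule.sum_mem _ fun i _ => ?_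
    by_cases hi : i ∈ s
    · exact Submodule.smul_mem _ _ (Submodule.subset_span (by
        simp only [Finset.coe_image, Set.mem_image, Finset.mem_coe]
        exact ⟨i, hi, rfl⟩))
    · rw [hco i hi, zero_smul]; exact Submodule.zero_mem _
  calc Module.finrank ℂ (Esp f₁)
      ≤ Module.finrank ℂ (Submodule.span ℂ ((s.image (eb f₁) : Finset (V G)) : Set (V G))) :=
        Submodule.finrank_mono hle
    _ ≤ (s.image (eb f₁)).card := finrank_span_finset_le_card _
    _ ≤ s.card := Finset.card_image_le

end BNP

namespace BNP
variable {G : Type} [Group G] [Fintype G]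

lemma T_const (f₁ : G → ℝ) (hmean : ∑ x : G, f₁ x = 0) (v : V G)
    (hc : ∀ x y : G, v x = v y) : T f₁ v = 0 := by
  ext x
  have : ∀ y : G, v y = v 1 := fun y => hc y 1
  simp only [T_apply, PiLp.zero_apply]
  calc ∑ y : G, (f₁ (x * y⁻¹) : ℂ) * v y = ∑ y : G, (f₁ (x * y⁻¹) : ℂ) * v 1 := by
        refine Finset.sum_congr rfl fun y _ => by rw [this y]
    _ = (∑ y : G, (f₁ (x * y⁻¹) : ℂ)) * v 1 := by rw [Finset.sum_mul]
    _ = 0 := by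
        have hb : Function.Bijective (fun y : G => x * y⁻¹) := by
          constructor
          · intro a b hab; simpa using hab
          · intro z; exact ⟨z⁻¹ * x, by group⟩
        have : ∑ y : G, (f₁ (x * y⁻¹) : ℂ) = ∑ z : G, (f₁ z : ℂ) :=
          Fintype.sum_bijective _ hb _ _ (fun y => rfl)
        rw [this]
        have : ∑ z : G, (f₁ z : ℂ) = ((∑ z : G, f₁ z : ℝ) : ℂ) := by push_cast; rfl
        rw [this, hmean]
        simp

lemma S_const (f₁ : G → ℝ) (hmean : ∑ x : G, f₁ x = 0) (v : V G)
    (hc : ∀ x y : G, v x = v y) : S f₁ v = 0 := by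
  have : S f₁ v = Tstar f₁ (T f₁ v) := rfl
  rw [this, T_const f₁ hmean v hc, map_zero]

lemma fixed_is_const (v : V G) (h : ∀ g : G, R g v = v) (x y : G) : v x = v y := by
  have hx : v x = v 1 := by
    have := congrFun (congrArg (fun w : V G => (w : G → ℂ)) (h x)) 1
    have h1 : v (1 * x) = v 1 := this
    rwa [one_mul] at h1
  have hy : v y = v 1 := by
    have := congrFun (congrArg (fun w : V G => (w : G → ℂ)) (h y)) 1
    have h1 : v (1 * y) = v 1 := this
    rwa [one_mul] at h1
  rw [hx, hy]

end BNP

namespace BNP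
variable {G : Type} [Group G] [Fintype G]

set_option maxHeartbeats 1000000 in
def bW (W : Submodule ℂ (V G)) : OrthonormalBasis (Fin (Module.finrank ℂ W)) ℂ W :=
  stdOrthonormalBasis ℂ W

/-- inner product on a submodule, with the instance pinned to avoid slow instance search -/
def innW (W : Submodule ℂ (V G)) (u v : W) : ℂ :=
  @inner ℂ W (Submodule.innerProductSpace W).toInner u v

lemma innW_eq (W : Submodule ℂ (V G)) (u v : W) :
    innW W u v = ⟪(u : V G), (v : V G)⟫_ℂ := rfl

def rhoW (W : Submodule ℂ (V G)) (hw : Inv W) (g : G) : W →ₗ[ℂ] W :=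
  (R g).restrict (fun v hv => hw g v hv)

lemma rhoW_coe (W : Submodule ℂ (V G)) (hw : Inv W) (g : G) (v : W) :
    (rhoW W hw g v : V G) = R g (v : V G) := rfl

def Mg (W : Submodule ℂ (V G)) (hw : Inv W) (g : G) :
    Matrix (Fin (Module.finrank ℂ W)) (Fin (Module.finrank ℂ W)) ℂ :=
  Matrix.of fun i j => innW W (bW W i) (rhoW W hw g (bW W j))

lemma innW_bW (W : Submodule ℂ (V G)) (i j : Fin (Module.finrank ℂ W)) :
    innW W (bW W i) (bW W j) = if i = j then 1 else 0 := by
  rcases eq_or_ne i j with h | h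
  · subst h
    have h2 : innW W (bW W i) (bW W i) = ((‖bW W i‖ : ℂ)) ^ 2 :=
      inner_self_eq_norm_sq_to_K (𝕜 := ℂ) (E := W) (bW W i)
    rw [if_pos rfl, h2, (bW W).orthonormal.1 i]
    norm_num
  · simp only [innW, if_neg h]
    exact (bW W).orthonormal.2 h

lemma bW_expand (W : Submodule ℂ (V G)) (x : W) :
    ∑ i, innW W (bW W i) x • bW W i = x := (bW W).sum_repr' x

lemma bW_parseval (W : Submodule ℂ (V G)) (x y : W) :
    ∑ i, innW W x (bW W i) * innW W (bW W i) y = innW W x y :=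
  (bW W).sum_inner_mul_inner x y

lemma innW_conj (W : Submodule ℂ (V G)) (u v : W) :
    (starRingEnd ℂ) (innW W u v) = innW W v u := by
  simpa only [innW] using inner_conj_symm (𝕜 := ℂ) (E := W) v u

lemma rhoW_expand (W : Submodule ℂ (V G)) (hw : Inv W) (g : G) (j : Fin (Module.finrank ℂ W)) :
    rhoW W hw g (bW W j) = ∑ i, Mg W hw g i j • bW W i :=
  (bW_expand W (rhoW W hw g (bW W j))).symm

lemma rhoW_inner (W : Submodule ℂ (V G)) (hw : Inv W) (g : G) (u v : W) :
    innW W (rhoW W hw g u) (rhoW W hw g v) = innW W u v := by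
  rw [innW_eq, innW_eq, rhoW_coe, rhoW_coe, R_inner]

lemma Mg_unitary (W : Submodule ℂ (V G)) (hw : Inv W) (g : G) :
    Mg W hw g ∈ Matrix.unitaryGroup (Fin (Module.finrank ℂ W)) ℂ := by
  rw [Matrix.mem_unitaryGroup_iff']
  ext i j
  have h1 : (star (Mg W hw g) * Mg W hw g) i j
      = ∑ k, innW W (rhoW W hw g (bW W i)) (bW W k) * innW W (bW W k) (rhoW W hw g (bW W j)) := by
    simp only [Matrix.mul_apply, Matrix.star_eq_conjTranspose, Matrix.conjTranspose_apply,
      Mg, Matrix.of_apply]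
    refine Finset.sum_congr rfl fun k _ => ?_
    rw [show star (innW W (bW W k) (rhoW W hw g (bW W i)))
        = (starRingEnd ℂ) (innW W (bW W k) (rhoW W hw g (bW W i))) from rfl,
      innW_conj]
  rw [h1, bW_parseval, rhoW_inner, innW_bW, Matrix.one_apply]

lemma rhoW_mul (W : Submodule ℂ (V G)) (hw : Inv W) (g h : G) (v : W) :
    rhoW W hw (g * h) v = rhoW W hw g (rhoW W hw h v) := by
  apply Subtype.ext
  rw [rhoW_coe, rhoW_coe, rhoW_coe, R_comp]

lemma innW_sum_right (W : Submodule ℂ (V G)) (u : W) {ι : Type} (s : Finset ι) (f : ι → W) :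
    innW W u (∑ k ∈ s, f k) = ∑ k ∈ s, innW W u (f k) := by
  simp only [innW]
  exact inner_sum (𝕜 := ℂ) s f u

lemma innW_smul_right (W : Submodule ℂ (V G)) (u v : W) (c : ℂ) :
    innW W u (c • v) = c * innW W u v := by
  simp only [innW]
  exact inner_smul_right (𝕜 := ℂ) u v c

lemma Mg_mul (W : Submodule ℂ (V G)) (hw : Inv W) (g h : G) :
    Mg W hw (g * h) = Mg W hw g * Mg W hw h := by
  ext i j
  rw [Matrix.mul_apply]
  show innW W (bW W i) (rhoW W hw (g * h) (bW W j)) = _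
  rw [rhoW_mul, rhoW_expand W hw h j, map_sum, innW_sum_right]
  refine Finset.sum_congr rfl fun k _ => ?_
  rw [LinearMap.map_smul, innW_smul_right, mul_comm]
  rfl

lemma rhoW_one (W : Submodule ℂ (V G)) (hw : Inv W) (v : W) : rhoW W hw 1 v = v := by
  apply Subtype.ext
  rw [rhoW_coe]
  ext x
  show (v : G → ℂ) (x * 1) = (v : G → ℂ) x
  rw [mul_one]

lemma Mg_one (W : Submodule ℂ (V G)) (hw : Inv W) : Mg W hw 1 = 1 := by
  ext i j
  show innW W (bW W i) (rhoW W hw 1 (bW W j)) = _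
  rw [rhoW_one, innW_bW, Matrix.one_apply]

def rhoMat (W : Submodule ℂ (V G)) (hw : Inv W) :
    G →* Matrix.unitaryGroup (Fin (Module.finrank ℂ W)) ℂ where
  toFun g := ⟨Mg W hw g, Mg_unitary W hw g⟩
  map_one' := Subtype.ext (Mg_one W hw)
  map_mul' g h := Subtype.ext (Mg_mul W hw g h)

end BNP

namespace BNP
variable {G : Type} [Group G] [Fintype G]

lemma bW_coe_ne_zero (W : Submodule ℂ (V G)) (j : Fin (Module.finrank ℂ W)) :
    ((bW W j : W) : V G) ≠ 0 := by
  intro h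
  have hz : (bW W j : W) = 0 := Subtype.ext h
  have h1 : ‖bW W j‖ = 1 := (bW W).orthonormal.1 j
  rw [hz] at h1
  simp at h1

lemma nontriv_rep (f₁ : G → ℝ) (hmean : ∑ x : G, f₁ x = 0) (hlam : 0 < lam f₁)
    (W : Submodule ℂ (V G)) (hW : W ≤ Esp f₁) (hw : Inv W) (hbot : W ≠ ⊥) :
    IsNontrivialRep (rhoMat W hw) := by
  by_contra hc
  simp only [IsNontrivialRep, not_exists, not_not] at hc
  have hd : Module.finrank ℂ W ≠ 0 := fun h => hbot (Submodule.finrank_eq_zero.1 h)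
  let j : Fin (Module.finrank ℂ W) := ⟨0, Nat.pos_of_ne_zero hd⟩
  have hMone : ∀ g : G, Mg W hw g = 1 := fun g => congrArg Subtype.val (hc g)
  have hfix : ∀ g : G, R g ((bW W j : W) : V G) = ((bW W j : W) : V G) := by
    intro g
    have h1 : rhoW W hw g (bW W j) = bW W j := by
      rw [rhoW_expand W hw g j, hMone g]
      have : ∀ i, ((1 : Matrix (Fin (Module.finrank ℂ W)) (Fin (Module.finrank ℂ W)) ℂ) i j) • bW W i
          = if i = j then bW W j else 0 := by
        intro i
        rcases eq_or_ne i j with h | h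
        · subst h; simp [Matrix.one_apply]
        · simp [Matrix.one_apply, h]
      rw [Finset.sum_congr rfl fun i _ => this i, Finset.sum_ite_eq' Finset.univ j _]
      simp
    calc R g ((bW W j : W) : V G) = (rhoW W hw g (bW W j) : V G) := rfl
      _ = ((bW W j : W) : V G) := by rw [h1]
  have hconst := fixed_is_const _ hfix
  have hS0 : S f₁ ((bW W j : W) : V G) = 0 := S_const f₁ hmean _ hconst
  have hmem : ((bW W j : W) : V G) ∈ Esp f₁ := hW (bW W j).2
  rw [mem_Esp, hS0] at hmem
  have : ((bW W j : W) : V G) = 0 := by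
    have := hmem.symm
    rcases smul_eq_zero.1 this with h | h
    · exact absurd h (by exact_mod_cast hlam.ne')
    · exact h
  exact bW_coe_ne_zero W j this

lemma irred_rep (f₁ : G → ℝ) (hlam : 0 < lam f₁)
    (W : Submodule ℂ (V G)) (hW : W ≤ Esp f₁) (hw : Inv W) (hbot : W ≠ ⊥)
    (hmin : ∀ W' : Submodule ℂ (V G), W' ≤ W → Inv W' → W' ≠ ⊥ → W' = W) :
    IsIrreducibleRep (rhoMat W hw) := by
  have hd : Module.finrank ℂ W ≠ 0 := fun h => hbot (Submodule.finrank_eq_zero.1 h)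
  refine ⟨Nat.pos_of_ne_zero hd, ?_⟩
  set d := Module.finrank ℂ W with hdd
  intro W' hinv
  -- the embedding of coordinates into W
  let ψ : (Fin d → ℂ) →ₗ[ℂ] W := (bW W).toBasis.equivFun.symm.toLinearMap
  let φ : (Fin d → ℂ) →ₗ[ℂ] V G := W.subtype.comp ψ
  have hψ : ∀ c : Fin d → ℂ, ψ c = ∑ i, c i • bW W i := by
    intro c
    simp only [ψ, LinearEquiv.coe_coe, Module.Basis.equivFun_symm_apply, OrthonormalBasis.coe_toBasis]
    rfl
  have hφinj : Function.Injective φ := by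
    intro a b hab
    exact (bW W).toBasis.equivFun.symm.injective (Subtype.ext hab)
  have hψcomm : ∀ (g : G) (c : Fin d → ℂ), rhoW W hw g (ψ c) = ψ ((Mg W hw g).mulVec c) := by
    intro g c
    rw [hψ, hψ, map_sum]
    have h1 : ∀ i, rhoW W hw g (c i • bW W i) = ∑ k, (Mg W hw g k i * c i) • bW W k := by
      intro i
      rw [LinearMap.map_smul, rhoW_expand W hw g i, Finset.smul_sum]
      refine Finset.sum_congr rfl fun k _ => ?_
      rw [smul_smul, mul_comm]
    rw [Finset.sum_congr rfl fun i _ => h1 i, Finset.sum_comm]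
    refine Finset.sum_congr rfl fun k _ => ?_
    rw [Matrix.mulVec, dotProduct, Finset.sum_smul]
  have hφcomm : ∀ (g : G) (c : Fin d → ℂ),
      R g (φ c) = φ ((Matrix.toLin' ((rhoMat W hw g : Matrix (Fin d) (Fin d) ℂ))) c) := by
    intro g c
    have : φ c = ((ψ c : W) : V G) := rfl
    rw [this]
    have h2 : R g ((ψ c : W) : V G) = ((rhoW W hw g (ψ c) : W) : V G) := rfl
    rw [h2, hψcomm]
    rw [Matrix.toLin'_apply]
    rfl
  set W'' := W'.map φ with hW''
  have hW''le : W'' ≤ W := by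
    rintro v ⟨c, _, rfl⟩
    exact (ψ c).2
  have hW''inv : Inv W'' := by
    rintro g v ⟨c, hc, rfl⟩
    rw [hφcomm g c]
    exact Submodule.mem_map_of_mem (hinv g (Submodule.mem_map_of_mem hc))
  by_cases hW''bot : W'' = ⊥
  · left
    rw [eq_bot_iff]
    intro c hc
    have : φ c ∈ W'' := Submodule.mem_map_of_mem hc
    rw [hW''bot, Submodule.mem_bot] at this
    have : c = 0 := hφinj (by rw [this, map_zero])
    simp [this]
  · right
    have hWW : W'' = W := hmin W'' hW''le hW''inv hW''bot
    have hfr : Module.finrank ℂ W' = d := by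
      have := LinearEquiv.finrank_eq (Submodule.equivMapOfInjective φ hφinj W')
      rw [this, ← hW'', hWW]
    apply Submodule.eq_top_of_finrank_eq
    rw [hfr, Module.finrank_fin_fun]

end BNP

namespace BNP
variable {G : Type} [Group G] [Fintype G]

lemma D_le_card_filter (D : ℕ) (hq : IsQuasirandom G D) (f₁ : G → ℝ)
    (hmean : ∑ x : G, f₁ x = 0) (hlam : 0 < lam f₁) :
    D ≤ (Finset.univ.filter (fun i => ev f₁ i = lam f₁)).card := by
  classical
  have hex : ∃ k, ∃ W : Submodule ℂ (V G),
      (Inv W ∧ W ≤ Esp f₁ ∧ W ≠ ⊥) ∧ Module.finrank ℂ W = k :=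
    ⟨_, Esp f₁, ⟨inv_Esp f₁, le_rfl, Esp_ne_bot f₁⟩, rfl⟩
  obtain ⟨W, ⟨hw, hWle, hWbot⟩, hWrank⟩ := Nat.find_spec hex
  have hmin : ∀ W' : Submodule ℂ (V G), W' ≤ W → Inv W' → W' ≠ ⊥ → W' = W := by
    intro W' h1 h2 h3
    have h4 : Nat.find hex ≤ Module.finrank ℂ W' :=
      Nat.find_min' hex ⟨W', ⟨h2, h1.trans hWle, h3⟩, rfl⟩
    refine Submodule.eq_of_le_of_finrank_le h1 ?_
    rw [hWrank]
    exact h4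
  have hD1 : D ≤ Module.finrank ℂ W :=
    hq _ (rhoMat W hw) (irred_rep f₁ hlam W hWle hw hWbot hmin)
      (nontriv_rep f₁ hmean hlam W hWle hw hWbot)
  calc D ≤ Module.finrank ℂ W := hD1
    _ ≤ Module.finrank ℂ (Esp f₁) := Submodule.finrank_mono hWle
    _ ≤ _ := finrank_Esp_le f₁

lemma lamD_le (D : ℕ) (hq : IsQuasirandom G D) (f₁ : G → ℝ)
    (hmean : ∑ x : G, f₁ x = 0) (hlam : 0 < lam f₁) :
    lam f₁ * D ≤ (Fintype.card G : ℝ) * ∑ z : G, f₁ z ^ 2 := by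
  classical
  set s := Finset.univ.filter (fun i => ev f₁ i = lam f₁) with hs
  have h1 : D ≤ s.card := D_le_card_filter D hq f₁ hmean hlam
  calc lam f₁ * D ≤ lam f₁ * s.card := by
        apply mul_le_mul_of_nonneg_left _ hlam.le
        exact_mod_cast h1
    _ = ∑ i ∈ s, ev f₁ i := by
        rw [Finset.sum_congr rfl (fun i hi => (Finset.mem_filter.1 hi).2), Finset.sum_const,
          nsmul_eq_mul, mul_comm]
    _ ≤ ∑ i, ev f₁ i := Finset.sum_le_sum_of_subset_of_nonneg (Finset.filter_subset _ _)
        (fun i _ _ => ev_nonneg f₁ i)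
    _ = (Fintype.card G : ℝ) * ∑ z : G, f₁ z ^ 2 := sum_ev f₁

lemma norm_sq_coords (u : V G) : ‖u‖ ^ 2 = ∑ x : G, Complex.normSq (u x) := by
  have h := inner_self_eq_norm_sq (𝕜 := ℂ) u
  have h2 : ⟪u, u⟫_ℂ = ((∑ x : G, Complex.normSq (u x) : ℝ) : ℂ) := by
    simp only [PiLp.inner_apply, RCLike.inner_apply]
    push_cast
    refine Finset.sum_congr rfl fun x _ => ?_
    rw [Complex.mul_conj]
  rw [← h, show (RCLike.re ⟪u, u⟫_ℂ : ℝ) = (⟪u, u⟫_ℂ).re from rfl, h2]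
  simp

end BNP

/-- Babai–Nikolov–Pyber inequality. -/
theorem stmt3 {G : Type} [Group G] [Fintype G] (D : ℕ) (hD : 0 < D)
    (hq : IsQuasirandom G D) (f₁ f₂ : G → ℝ) (hmean : ∑ x : G, f₁ x = 0) :
    Real.sqrt (∑ x : G, conv f₁ f₂ x ^ 2) ≤
      Real.sqrt ((Fintype.card G : ℝ) / D) *
        (Real.sqrt (∑ x : G, f₁ x ^ 2) * Real.sqrt (∑ x : G, f₂ x ^ 2)) := by
  classical
  set v : BNP.V G := WithLp.toLp 2 (fun x => (f₂ x : ℂ)) with hv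
  have hTv : ∀ x : G, BNP.T f₁ v x = ((conv f₁ f₂ x : ℝ) : ℂ) := by
    intro x
    rw [BNP.T_apply]
    unfold conv
    push_cast
    rfl
  have hL : ∑ x : G, conv f₁ f₂ x ^ 2 = ‖BNP.T f₁ v‖ ^ 2 := by
    rw [BNP.norm_sq_coords]
    refine Finset.sum_congr rfl fun x _ => ?_
    rw [hTv x, Complex.normSq_ofReal, sq]
  have hR : ‖v‖ ^ 2 = ∑ x : G, f₂ x ^ 2 := by
    rw [BNP.norm_sq_coords]
    refine Finset.sum_congr rfl fun x _ => ?_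
    have : v x = ((f₂ x : ℝ) : ℂ) := rfl
    rw [this, Complex.normSq_ofReal, sq]
  have hkey : ∑ x : G, conv f₁ f₂ x ^ 2 ≤
      ((Fintype.card G : ℝ) / D) * ((∑ x : G, f₁ x ^ 2) * (∑ x : G, f₂ x ^ 2)) := by
    rcases le_or_gt (BNP.lam f₁) 0 with hl | hl
    · have h1 : ‖BNP.T f₁ v‖ ^ 2 ≤ BNP.lam f₁ * ‖v‖ ^ 2 := BNP.norm_T_le f₁ v
      have h2 : BNP.lam f₁ * ‖v‖ ^ 2 ≤ 0 := mul_nonpos_of_nonpos_of_nonneg hl (sq_nonneg _)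
      have h3 : ∑ x : G, conv f₁ f₂ x ^ 2 ≤ 0 := by rw [hL]; exact h1.trans h2
      have hrhs : 0 ≤ ((Fintype.card G : ℝ) / D) * ((∑ x : G, f₁ x ^ 2) * (∑ x : G, f₂ x ^ 2)) := by
        positivity
      linarith
    · have h1 := BNP.norm_T_le f₁ v
      have h2 := BNP.lamD_le D hq f₁ hmean hl
      have hDpos : (0 : ℝ) < D := by exact_mod_cast hD
      have h3 : BNP.lam f₁ ≤ (Fintype.card G : ℝ) * (∑ z : G, f₁ z ^ 2) / D := by
        rw [le_div_iff₀ hDpos]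
        exact h2
      have hf₂ : (0 : ℝ) ≤ ∑ x : G, f₂ x ^ 2 := Finset.sum_nonneg fun x _ => sq_nonneg _
      calc ∑ x : G, conv f₁ f₂ x ^ 2 = ‖BNP.T f₁ v‖ ^ 2 := hL
        _ ≤ BNP.lam f₁ * ‖v‖ ^ 2 := h1
        _ = BNP.lam f₁ * ∑ x : G, f₂ x ^ 2 := by rw [hR]
        _ ≤ ((Fintype.card G : ℝ) * (∑ z : G, f₁ z ^ 2) / D) * ∑ x : G, f₂ x ^ 2 :=
            mul_le_mul_of_nonneg_right h3 hf₂
        _ = ((Fintype.card G : ℝ) / D) * ((∑ x : G, f₁ x ^ 2) * (∑ x : G, f₂ x ^ 2)) := by ring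
  have hmono := Real.sqrt_le_sqrt hkey
  rwa [Real.sqrt_mul (by positivity) ((∑ x : G, f₁ x ^ 2) * (∑ x : G, f₂ x ^ 2)),
    Real.sqrt_mul (Finset.sum_nonneg fun x _ => sq_nonneg _)] at hmono
end
end

section
/- Let G be a D-quasirandom finite group and f : G → ℝ with ∑_{x∈G} f(x) = 0. Then (1/|G|) ∑_{x∈G} |(1/|G|) ∑_{y∈G} f(y)f(yx)| ≤ ‖f‖₂² / (D^{1/2}|G|). -/
open Matrix BigOperators Finset
open scoped Classical

noncomputable section

section Aux

variable {G : Type} [Group G] [Fintype G]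

def Rlin (g : G) : EuclideanSpace ℂ G →ₗ[ℂ] EuclideanSpace ℂ G where
  toFun v := WithLp.toLp 2 (fun x => v (x * g))
  map_add' u v := rfl
  map_smul' c v := rfl

lemma Rlin_apply (g : G) (v : EuclideanSpace ℂ G) (x : G) : Rlin g v x = v (x * g) := rfl

lemma Rlin_inner (g : G) (u v : EuclideanSpace ℂ G) :
    (inner ℂ (Rlin g u) (Rlin g v) : ℂ) = inner ℂ u v := by
  simp only [PiLp.inner_apply, RCLike.inner_apply, Rlin_apply]
  exact Fintype.sum_equiv (Equiv.mulRight g) _ _ (fun x => rfl)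

lemma Rlin_mul (g h : G) (v : EuclideanSpace ℂ G) :
    Rlin g (Rlin h v) = Rlin (g * h) v := by
  ext x
  rw [Rlin_apply, Rlin_apply, Rlin_apply, mul_assoc]

lemma Rlin_one (v : EuclideanSpace ℂ G) : Rlin 1 v = v := by
  ext x
  rw [Rlin_apply, mul_one]

lemma Rlin_fixed {v : EuclideanSpace ℂ G} (h : ∀ g, Rlin g v = v) (x : G) : v x = v 1 := by
  have : Rlin x v 1 = v 1 := by rw [h x]
  rw [Rlin_apply, one_mul] at this
  exact this

set_option maxHeartbeats 1000000 in
lemma rep_dim {D : ℕ} (hq : IsQuasirandom G D)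
    (W : Submodule ℂ (EuclideanSpace ℂ G)) (hbot : W ≠ ⊥)
    (hinv : ∀ g, ∀ v ∈ W, Rlin g v ∈ W)
    (hfix : ∀ v ∈ W, (∀ g : G, Rlin g v = v) → v = 0) :
    D ≤ Module.finrank ℂ W := by
  classical
  set P : Submodule ℂ (EuclideanSpace ℂ G) → Prop :=
    fun U => U ≠ ⊥ ∧ U ≤ W ∧ ∀ g, ∀ v ∈ U, Rlin g v ∈ U with hP
  have hPW : P W := ⟨hbot, le_rfl, hinv⟩
  set s : Set ℕ := (fun U : Submodule ℂ (EuclideanSpace ℂ G) => Module.finrank ℂ U) '' {U | P U}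
    with hs_def
  have hs : s.Nonempty := ⟨_, ⟨W, hPW, rfl⟩⟩
  obtain ⟨W', hPW', hrank⟩ := Nat.sInf_mem hs
  have hrank' : Module.finrank ℂ W' = sInf s := hrank
  have hmin : ∀ U : Submodule ℂ (EuclideanSpace ℂ G), P U → sInf s ≤ Module.finrank ℂ U :=
    fun U hU => Nat.sInf_le ⟨U, hU, rfl⟩
  have hW'le : W' ≤ W := hPW'.2.1
  have hW'inv := hPW'.2.2
  letI : NormedAddCommGroup W' := W'.normedAddCommGroup
  letI : InnerProductSpace ℂ W' := W'.innerProductSpace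
  have hd : 0 < Module.finrank ℂ W' :=
    Nat.pos_of_ne_zero (fun h => hPW'.1 (Submodule.finrank_eq_zero.mp h))
  set d := Module.finrank ℂ W' with hd_def
  let b : OrthonormalBasis (Fin d) ℂ W' := stdOrthonormalBasis ℂ W'
  let Lg : G → (W' →ₗ[ℂ] W') := fun g => (Rlin g).restrict (fun v hv => hW'inv g v hv)
  have Lg_coe : ∀ g (v : W'), ((Lg g v : W') : EuclideanSpace ℂ G) = Rlin g v := fun _ _ => rfl
  let ρm : G → Matrix (Fin d) (Fin d) ℂ := fun g => LinearMap.toMatrix b.toBasis b.toBasis (Lg g)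
  have ρm_entry : ∀ g i j, ρm g i j = inner ℂ (b i) (Lg g (b j)) := by
    intro g i j
    rw [show ρm g = LinearMap.toMatrix b.toBasis b.toBasis (Lg g) from rfl,
      LinearMap.toMatrix_apply, OrthonormalBasis.coe_toBasis_repr_apply,
      OrthonormalBasis.repr_apply_apply, OrthonormalBasis.coe_toBasis]
  have inner_Lg : ∀ g (u v : W'), (inner ℂ (Lg g u) (Lg g v) : ℂ) = inner ℂ u v := by
    intro g u v
    rw [Submodule.coe_inner, Submodule.coe_inner, Lg_coe, Lg_coe]
    exact Rlin_inner g u v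
  have hmem : ∀ g, ρm g ∈ Matrix.unitaryGroup (Fin d) ℂ := by
    intro g
    rw [Matrix.mem_unitaryGroup_iff]
    rw [mul_eq_one_comm.symm]
    ext i j
    rw [Matrix.mul_apply]
    have : ∀ k, (star (ρm g)) i k * ρm g k j
        = (inner ℂ (Lg g (b i)) (b k) : ℂ) * inner ℂ (b k) (Lg g (b j)) := by
      intro k
      rw [Matrix.star_apply, ρm_entry, ρm_entry, RCLike.star_def, inner_conj_symm]
    rw [Finset.sum_congr rfl (fun k _ => this k)]
    rw [b.sum_inner_mul_inner (Lg g (b i)) (Lg g (b j))]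
    rw [inner_Lg]
    rw [orthonormal_iff_ite.mp b.orthonormal i j, Matrix.one_apply]
  have hmul : ∀ g h, ρm (g * h) = ρm g * ρm h := by
    intro g h
    have hL : Lg (g * h) = (Lg g) ∘ₗ (Lg h) := by
      apply LinearMap.ext
      intro v
      apply Subtype.ext
      rw [LinearMap.comp_apply, Lg_coe, Lg_coe, Lg_coe, Rlin_mul]
    show LinearMap.toMatrix b.toBasis b.toBasis (Lg (g * h))
      = LinearMap.toMatrix b.toBasis b.toBasis (Lg g) * LinearMap.toMatrix b.toBasis b.toBasis (Lg h)
    rw [hL, LinearMap.toMatrix_comp b.toBasis b.toBasis b.toBasis]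
  have hone : ρm 1 = 1 := by
    have hL : Lg 1 = LinearMap.id := by
      apply LinearMap.ext
      intro v
      apply Subtype.ext
      rw [LinearMap.id_apply, Lg_coe, Rlin_one]
    show LinearMap.toMatrix b.toBasis b.toBasis (Lg 1) = 1
    rw [hL, LinearMap.toMatrix_id]
  let ρ : G →* Matrix.unitaryGroup (Fin d) ℂ :=
    { toFun := fun g => ⟨ρm g, hmem g⟩,
      map_one' := Subtype.ext hone,
      map_mul' := fun g h => Subtype.ext (hmul g h) }
  have hρ_coe : ∀ g, ((ρ g : Matrix.unitaryGroup (Fin d) ℂ) : Matrix (Fin d) (Fin d) ℂ) = ρm g :=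
    fun g => rfl
  -- nontrivial
  have hnt : IsNontrivialRep ρ := by
    by_contra h
    rw [IsNontrivialRep] at h
    push_neg at h
    have hfixb : ∀ g, Rlin g ((b ⟨0, hd⟩ : W') : EuclideanSpace ℂ G) = (b ⟨0, hd⟩ : W') := by
      intro g
      have h1 : Lg g = LinearMap.id := by
        apply (LinearMap.toMatrix b.toBasis b.toBasis).injective
        rw [LinearMap.toMatrix_id]
        exact congrArg Subtype.val (h g)
      rw [← Lg_coe g, h1]
      rfl
    have h0 : ((b ⟨0, hd⟩ : W') : EuclideanSpace ℂ G) = 0 :=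
      hfix _ (hW'le (b ⟨0, hd⟩).2) hfixb
    exact b.orthonormal.ne_zero ⟨0, hd⟩ (by exact_mod_cast h0)
  -- irreducible
  have hirr : IsIrreducibleRep ρ := by
    refine ⟨hd, ?_⟩
    intro U hU
    by_cases hUbot : U = ⊥
    · exact Or.inl hUbot
    right
    let ψ : (Fin d → ℂ) ≃ₗ[ℂ] W' := b.toBasis.equivFun.symm
    let U' : Submodule ℂ (EuclideanSpace ℂ G) :=
      Submodule.map W'.subtype (U.map (ψ : (Fin d → ℂ) →ₗ[ℂ] W'))
    have hU'le : U' ≤ W' := by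
      rintro v ⟨w, _, rfl⟩
      exact w.2
    have hkey : ∀ g (u : Fin d → ℂ), Lg g (ψ u) = ψ ((ρm g) *ᵥ u) := by
      intro g u
      apply b.toBasis.equivFun.injective
      rw [show (ψ ((ρm g) *ᵥ u) : W') = b.toBasis.equivFun.symm ((ρm g) *ᵥ u) from rfl,
        LinearEquiv.apply_symm_apply]
      have h2 := LinearMap.toMatrix_mulVec_repr b.toBasis b.toBasis (Lg g) (ψ u)
      have h3 : ⇑(b.toBasis.repr (ψ u)) = u := by
        have h4 : b.toBasis.equivFun (ψ u) = u := b.toBasis.equivFun.apply_symm_apply u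
        rw [Module.Basis.equivFun_apply] at h4
        exact h4
      rw [h3] at h2
      rw [Module.Basis.equivFun_apply]
      exact h2.symm
    have hU'inv : ∀ g, ∀ v ∈ U', Rlin g v ∈ U' := by
      rintro g v ⟨w, hw, rfl⟩
      rcases hw with ⟨u, hu, rfl⟩
      show Rlin g ((ψ u : W') : EuclideanSpace ℂ G) ∈ U'
      rw [show Rlin g ((ψ u : W') : EuclideanSpace ℂ G)
        = ((Lg g (ψ u) : W') : EuclideanSpace ℂ G) from rfl, hkey]
      refine ⟨ψ ((ρm g) *ᵥ u), Submodule.mem_map_of_mem ?_, rfl⟩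
      apply hU g
      refine ⟨u, hu, ?_⟩
      rw [Matrix.toLin'_apply, hρ_coe]
    have hU'bot : U' ≠ ⊥ := by
      obtain ⟨u, hu, hune⟩ := Submodule.exists_mem_ne_zero_of_ne_bot hUbot
      intro hcon
      apply hune
      have hmem' : ((ψ u : W') : EuclideanSpace ℂ G) ∈ U' :=
        ⟨ψ u, Submodule.mem_map_of_mem hu, rfl⟩
      rw [hcon, Submodule.mem_bot] at hmem'
      have : (ψ u : W') = 0 := by exact_mod_cast hmem'
      simpa using ψ.injective (by simpa using this)
    have hPU' : P U' := ⟨hU'bot, le_trans hU'le hW'le, hU'inv⟩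
    have h1 : sInf s ≤ Module.finrank ℂ U' := hmin U' hPU'
    have hU'eq : U' = W' := Submodule.eq_of_le_of_finrank_le hU'le (hrank'.trans_le h1)
    have hfr : Module.finrank ℂ U = Module.finrank ℂ U' := by
      rw [show U' = Submodule.map W'.subtype (U.map (ψ : (Fin d → ℂ) →ₗ[ℂ] W')) from rfl,
        Submodule.finrank_map_subtype_eq, LinearEquiv.finrank_map_eq]
    apply Submodule.eq_top_of_finrank_eq
    rw [hfr, hU'eq, Module.finrank_fin_fun]
  have hD : D ≤ d := hq d ρ hirr hnt
  exact le_trans hD (hrank'.trans_le (hmin W hPW))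

end Aux

section Main

open scoped ComplexOrder

variable {G : Type} [Group G] [Fintype G]

/-- `mulVec` as a map on `EuclideanSpace`. -/
def mvE (C : Matrix G G ℂ) (v : EuclideanSpace ℂ G) : EuclideanSpace ℂ G := WithLp.toLp 2 (C *ᵥ v)

lemma mvE_add (C : Matrix G G ℂ) (u v : EuclideanSpace ℂ G) : mvE C (u + v) = mvE C u + mvE C v := by
  ext x; simp [mvE, Matrix.mulVec_add]

lemma mvE_smul (C : Matrix G G ℂ) (c : ℂ) (v : EuclideanSpace ℂ G) : mvE C (c • v) = c • mvE C v := by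
  ext x; simp [mvE, Matrix.mulVec_smul]

lemma mvE_zero (C : Matrix G G ℂ) : mvE C 0 = 0 := by
  ext x; simp [mvE]

set_option maxHeartbeats 1000000 in
theorem stmt4' (D : ℕ) (hD : 0 < D)
    (hq : IsQuasirandom G D) (f : G → ℝ) (hmean : ∑ x : G, f x = 0) :
    (1 / (Fintype.card G : ℝ)) *
        ∑ x : G, |(1 / (Fintype.card G : ℝ)) * ∑ y : G, f y * f (y * x)| ≤
      (∑ x : G, f x ^ 2) / (Real.sqrt D * (Fintype.card G : ℝ)) := by
  classical
  set N : ℕ := Fintype.card G with hN_def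
  have hN : 0 < N := Fintype.card_pos
  have hNR : (0:ℝ) < N := by exact_mod_cast hN
  set S : ℝ := ∑ x : G, f x ^ 2 with hS_def
  have hS0 : 0 ≤ S := Finset.sum_nonneg (fun _ _ => sq_nonneg _)
  set A : G → ℝ := fun x => ∑ y : G, f y * f (y * x) with hA_def
  have hDR : (0:ℝ) < D := by exact_mod_cast hD
  -- the matrices
  set fc : EuclideanSpace ℂ G := WithLp.toLp 2 (fun x => (f x : ℂ)) with hfc_def
  set M : Matrix G G ℂ := Matrix.of (fun x y => (f (y * x) : ℂ)) with hM_def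
  have hM_apply : ∀ x y, M x y = (f (y * x) : ℂ) := fun _ _ => rfl
  set C : Matrix G G ℂ := Mᴴ * M with hC_def
  have hpsd : C.PosSemidef := Matrix.posSemidef_conjTranspose_mul_self M
  have hherm : C.IsHermitian := hpsd.1
  have hC_apply : ∀ x z, C x z
      = ∑ y, (starRingEnd ℂ) ((f (x * y) : ℂ)) * (f (z * y) : ℂ) := by
    intro x z
    rw [hC_def, Matrix.mul_apply]
    refine Finset.sum_congr rfl (fun y _ => ?_)
    rw [Matrix.conjTranspose_apply, hM_apply, hM_apply, RCLike.star_def]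
  -- shift invariance of C
  have hCsh : ∀ (g x z : G), C (x * g) (z * g) = C x z := by
    intro g x z
    rw [hC_apply, hC_apply]
    refine Fintype.sum_equiv (Equiv.mulLeft g) _ _ (fun y => ?_)
    simp only [Equiv.coe_mulLeft]
    rw [mul_assoc, mul_assoc]
  -- C annihilates constants
  have hM1 : M *ᵥ (fun _ => (1:ℂ)) = 0 := by
    funext x
    show ∑ y, M x y * 1 = 0
    calc ∑ y, M x y * 1 = ∑ y, ((f (y * x) : ℝ) : ℂ) := by
          refine Finset.sum_congr rfl (fun y _ => ?_); rw [hM_apply, mul_one]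
      _ = ∑ y, ((f y : ℝ) : ℂ) := Fintype.sum_equiv (Equiv.mulRight x) _ _ (fun y => rfl)
      _ = ((∑ y : G, f y : ℝ) : ℂ) := by push_cast; rfl
      _ = 0 := by rw [hmean, Complex.ofReal_zero]
  have hC1 : C *ᵥ (fun _ => (1:ℂ)) = 0 := by
    rw [hC_def, ← Matrix.mulVec_mulVec, hM1, Matrix.mulVec_zero]
  -- trace of C
  have htrace : C.trace = ((N * S : ℝ) : ℂ) := by
    have hdiag : ∀ x, C x x = ((S : ℝ) : ℂ) := by
      intro x
      rw [hC_apply]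
      calc ∑ y, (starRingEnd ℂ) ((f (x * y) : ℂ)) * (f (x * y) : ℂ)
          = ∑ y, ((f (x * y) ^ 2 : ℝ) : ℂ) := by
            refine Finset.sum_congr rfl (fun y _ => ?_)
            rw [Complex.conj_ofReal]; push_cast; ring
        _ = ∑ y, ((f y ^ 2 : ℝ) : ℂ) := Fintype.sum_equiv (Equiv.mulLeft x) _ _ (fun y => rfl)
        _ = ((S : ℝ) : ℂ) := by rw [hS_def]; push_cast; rfl
    calc C.trace = ∑ x : G, C x x := rfl
      _ = ∑ _x : G, ((S : ℝ) : ℂ) := Finset.sum_congr rfl (fun x _ => hdiag x)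
      _ = (N : ℂ) * ((S : ℝ) : ℂ) := by
          rw [Finset.sum_const, Finset.card_univ, nsmul_eq_mul, hN_def]
      _ = ((N * S : ℝ) : ℂ) := by push_cast; ring
  have hsum_eig : ∑ j : G, hherm.eigenvalues j = N * S := by
    have h2 : C.trace = ((∑ j : G, hherm.eigenvalues j : ℝ) : ℂ) := by
      rw [hherm.trace_eq_sum_eigenvalues]
      simp
    have h3 := h2.symm.trans htrace
    exact_mod_cast h3
  -- symmetry
  have hsym : ∀ (u v : EuclideanSpace ℂ G), (inner ℂ u (mvE C v) : ℂ) = inner ℂ (mvE C u) v :=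
    fun u v => ((Matrix.isHermitian_iff_isSymmetric.mp hherm) u v).symm
  set b : OrthonormalBasis G ℂ (EuclideanSpace ℂ G) := hherm.eigenvectorBasis with hb_def
  have heigvec : ∀ j, mvE C (b j) = ((hherm.eigenvalues j : ℝ) : ℂ) • (b j) := by
    intro j
    have h := hherm.mulVec_eigenvectorBasis j
    have h3 : hherm.eigenvalues j • (⇑(hherm.eigenvectorBasis j) : G → ℂ)
        = (((hherm.eigenvalues j : ℝ) : ℂ) • (hherm.eigenvectorBasis j) : EuclideanSpace ℂ G) := by
      funext x
      simp [Pi.smul_apply, PiLp.smul_apply, Complex.real_smul]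
    exact WithLp.ofLp_injective 2 (h.trans h3)
  have hbC : ∀ (j : G) (w : EuclideanSpace ℂ G),
      (inner ℂ (b j) (mvE C w) : ℂ) = ((hherm.eigenvalues j : ℝ) : ℂ) * inner ℂ (b j) w := by
    intro j w
    rw [hsym (b j) w, heigvec j, inner_smul_left, Complex.conj_ofReal]
  -- eigenvalue bound
  have heig : ∀ i : G, hherm.eigenvalues i ≤ N * S / D := by
    intro i
    rcases le_or_gt (hherm.eigenvalues i) 0 with hle | hpos
    · exact le_trans hle (by positivity)
    set μ : ℝ := hherm.eigenvalues i with hμ_def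
    have hμC : ((μ : ℝ) : ℂ) ≠ 0 := by exact_mod_cast hpos.ne'
    set E : Submodule ℂ (EuclideanSpace ℂ G) :=
      { carrier := {v | mvE C v = ((μ : ℝ) : ℂ) • v},
        add_mem' := by
          intro a b' ha hb'
          have ha' : mvE C a = ((μ : ℝ) : ℂ) • a := ha
          have hb'' : mvE C b' = ((μ : ℝ) : ℂ) • b' := hb'
          show mvE C (a + b') = ((μ : ℝ) : ℂ) • (a + b')
          rw [mvE_add, ha', hb'', smul_add]
        zero_mem' := by
          show mvE C (0 : EuclideanSpace ℂ G) = ((μ : ℝ) : ℂ) • (0 : EuclideanSpace ℂ G)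
          rw [mvE_zero, smul_zero]
        smul_mem' := by
          intro c a ha
          have ha' : mvE C a = ((μ : ℝ) : ℂ) • a := ha
          show mvE C (c • a) = ((μ : ℝ) : ℂ) • (c • a)
          rw [mvE_smul, ha', smul_comm] } with hE_def
    have hE_mem : ∀ v : EuclideanSpace ℂ G, v ∈ E ↔ mvE C v = ((μ : ℝ) : ℂ) • v :=
      fun v => Iff.rfl
    have hEinv : ∀ g, ∀ v ∈ E, Rlin g v ∈ E := by
      intro g v hv
      rw [hE_mem] at hv ⊢
      show mvE C (Rlin g v) = ((μ : ℝ) : ℂ) • (Rlin g v)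
      ext x
      calc (mvE C (Rlin g v)) x = ∑ z, C x z * v (z * g) := rfl
        _ = ∑ z, C (x * g) z * v z := by
            refine Fintype.sum_equiv (Equiv.mulRight g) _ _ (fun z => ?_)
            simp only [Equiv.coe_mulRight]
            rw [hCsh g x z]
        _ = (mvE C v) (x * g) := rfl
        _ = (((μ : ℝ) : ℂ) • v) (x * g) := by rw [show mvE C v = ((μ:ℝ):ℂ) • v from hv]
        _ = (((μ : ℝ) : ℂ) • (Rlin g v)) x := rfl
    have hEfix : ∀ v ∈ E, (∀ g : G, Rlin g v = v) → v = 0 := by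
      intro v hv hfixv
      have hconst : v = v 1 • (WithLp.toLp 2 (fun _ => (1:ℂ)) : EuclideanSpace ℂ G) := by
        ext x
        show v x = v 1 * 1
        rw [mul_one]
        exact Rlin_fixed hfixv x
      have h0 : mvE C v = 0 := by
        show mvE C v = 0
        conv_lhs => rw [hconst]
        rw [mvE_smul, show mvE C (WithLp.toLp 2 (fun _ => (1:ℂ))) = 0 by
          show WithLp.toLp 2 (C *ᵥ (fun _ => (1:ℂ))) = 0
          rw [hC1]; simp, smul_zero]
      have h1 : ((μ : ℝ) : ℂ) • v = 0 := by
        rw [← (hE_mem v).mp hv, h0]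
      exact (smul_eq_zero.mp h1).resolve_left hμC
    have hEbot : E ≠ ⊥ := by
      intro hcon
      have hbmem : b i ∈ E := by
        rw [hE_mem]
        exact heigvec i
      rw [hcon, Submodule.mem_bot] at hbmem
      exact b.orthonormal.ne_zero i hbmem
    have hdim : D ≤ Module.finrank ℂ E := rep_dim hq E hEbot hEinv hEfix
    set sI : Finset G := Finset.univ.filter (fun j => hherm.eigenvalues j = μ) with hsI_def
    have hspan : E ≤ Submodule.span ℂ
        (↑(sI.image (fun j => (b j : EuclideanSpace ℂ G)))) := by
      intro v hv
      have hcoef : ∀ j, hherm.eigenvalues j ≠ μ → (inner ℂ (b j) v : ℂ) = 0 := by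
        intro j hj
        have e1 := hbC j v
        have e2 : (inner ℂ (b j) (mvE C v) : ℂ) = ((μ : ℝ) : ℂ) * inner ℂ (b j) v := by
          rw [(hE_mem v).mp hv, inner_smul_right]
        have e3 := e1.symm.trans e2
        have hz : (((hherm.eigenvalues j : ℝ) : ℂ) - ((μ : ℝ) : ℂ)) * inner ℂ (b j) v = 0 := by
          rw [sub_mul, e3, sub_self]
        rcases mul_eq_zero.mp hz with h | h
        · exact absurd (by exact_mod_cast sub_eq_zero.mp h) hj
        · exact h
      rw [← b.sum_repr v]
      apply Submodule.sum_mem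
      intro j _
      by_cases hj : hherm.eigenvalues j = μ
      · apply Submodule.smul_mem
        apply Submodule.subset_span
        refine Finset.mem_coe.mpr (Finset.mem_image.mpr ⟨j, ?_, rfl⟩)
        rw [hsI_def]
        simp [hj]
      · rw [b.repr_apply_apply, hcoef j hj, zero_smul]
        exact Submodule.zero_mem _
    have hfinE : Module.finrank ℂ E ≤ sI.card := by
      have h1 : Module.finrank ℂ E
          ≤ Module.finrank ℂ (Submodule.span ℂ
            (↑(sI.image (fun j => (b j : EuclideanSpace ℂ G))))) :=
        Submodule.finrank_mono hspan
      have h2 := finrank_span_finset_le_card (R := ℂ)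
        (sI.image (fun j => (b j : EuclideanSpace ℂ G)))
      rw [Set.finrank] at h2
      exact le_trans (le_trans h1 h2) Finset.card_image_le
    have hDcard : (D:ℝ) ≤ sI.card := by exact_mod_cast le_trans hdim hfinE
    have hfinal : μ * D ≤ N * S := by
      calc μ * D ≤ μ * sI.card := mul_le_mul_of_nonneg_left hDcard hpos.le
        _ = ∑ _j ∈ sI, μ := by rw [Finset.sum_const, nsmul_eq_mul]; ring
        _ = ∑ j ∈ sI, hherm.eigenvalues j :=
            Finset.sum_congr rfl (fun j hj => by
              rw [hsI_def] at hj
              exact ((Finset.mem_filter.mp hj).2).symm)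
        _ ≤ ∑ j : G, hherm.eigenvalues j :=
            Finset.sum_le_sum_of_subset_of_nonneg (Finset.subset_univ _)
              (fun j _ _ => hpsd.eigenvalues_nonneg j)
        _ = N * S := hsum_eig
    rw [le_div_iff₀ hDR]
    exact hfinal
  -- Rayleigh bound applied to fc
  have hexp : (inner ℂ fc (mvE C fc) : ℂ)
      = ∑ j : G, ((hherm.eigenvalues j : ℝ) : ℂ) * (inner ℂ fc (b j) * inner ℂ (b j) fc) := by
    rw [← b.sum_inner_mul_inner fc (mvE C fc)]
    refine Finset.sum_congr rfl (fun j _ => ?_)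
    rw [hbC j fc]
    ring
  have hinner_normsq : ∀ j : G, (inner ℂ fc (b j) : ℂ) * inner ℂ (b j) fc
      = ((Complex.normSq (inner ℂ (b j) fc) : ℝ) : ℂ) := by
    intro j
    rw [← inner_conj_symm fc (b j), mul_comm, Complex.mul_conj]
  have hre : (inner ℂ fc (mvE C fc) : ℂ).re
      = ∑ j : G, hherm.eigenvalues j * Complex.normSq (inner ℂ (b j) fc) := by
    rw [hexp]
    have h4' : ∀ j : G, ((hherm.eigenvalues j : ℝ) : ℂ) * (inner ℂ fc (b j) * inner ℂ (b j) fc)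
        = ((hherm.eigenvalues j * Complex.normSq (inner ℂ (b j) fc) : ℝ) : ℂ) := by
      intro j
      rw [hinner_normsq j, Complex.ofReal_mul]
    have h4 : ∑ j : G, ((hherm.eigenvalues j : ℝ) : ℂ) * (inner ℂ fc (b j) * inner ℂ (b j) fc)
        = ((∑ j : G, hherm.eigenvalues j * Complex.normSq (inner ℂ (b j) fc) : ℝ) : ℂ) := by
      rw [Finset.sum_congr rfl (fun j _ => h4' j), Complex.ofReal_sum]
    rw [h4, Complex.ofReal_re]
  have hfcS : (inner ℂ fc fc : ℂ) = ((S : ℝ) : ℂ) := by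
    rw [PiLp.inner_apply]
    simp only [RCLike.inner_apply]
    rw [hS_def]
    push_cast
    refine Finset.sum_congr rfl (fun x _ => ?_)
    rw [show fc x = ((f x : ℝ) : ℂ) from rfl, Complex.conj_ofReal]
    ring
  have h6 : ∑ j : G, Complex.normSq (inner ℂ (b j) fc) = S := by
    have h7 : ((S:ℝ):ℂ) = ∑ j : G, (inner ℂ fc (b j) : ℂ) * inner ℂ (b j) fc := by
      rw [b.sum_inner_mul_inner fc fc, hfcS]
    have h8 : ((S:ℝ):ℂ)
        = ((∑ j : G, Complex.normSq (inner ℂ (b j) fc) : ℝ) : ℂ) := by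
      rw [h7, Finset.sum_congr rfl
        (fun j (_ : j ∈ Finset.univ) => hinner_normsq j), Complex.ofReal_sum]
    exact_mod_cast h8.symm
  have hQle : (inner ℂ fc (mvE C fc) : ℂ).re ≤ N * S / D * S := by
    rw [hre]
    calc ∑ j : G, hherm.eigenvalues j * Complex.normSq (inner ℂ (b j) fc)
        ≤ ∑ j : G, (N * S / D) * Complex.normSq (inner ℂ (b j) fc) :=
          Finset.sum_le_sum (fun j _ =>
            mul_le_mul_of_nonneg_right (heig j) (Complex.normSq_nonneg _))
      _ = (N * S / D) * ∑ j : G, Complex.normSq (inner ℂ (b j) fc) := (Finset.mul_sum _ _ _).symm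
      _ = N * S / D * S := by rw [h6]
  -- identify the quadratic form with ∑ A²
  have hMfc : (M *ᵥ (fc : G → ℂ)) = (fun x => ((A x : ℝ) : ℂ)) := by
    funext x
    show ∑ y, M x y * fc y = ((A x : ℝ) : ℂ)
    rw [hA_def]
    push_cast
    refine Finset.sum_congr rfl (fun y _ => ?_)
    rw [hM_apply, show fc y = ((f y : ℝ) : ℂ) from rfl]
    ring
  have hQ : (inner ℂ fc (mvE C fc) : ℂ) = ((∑ x : G, A x ^ 2 : ℝ) : ℂ) := by
    have hdp := EuclideanSpace.inner_eq_star_dotProduct fc (mvE C fc)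
    rw [show (inner ℂ fc (mvE C fc) : ℂ)
      = star (fc : G → ℂ) ⬝ᵥ (C *ᵥ (fc : G → ℂ)) from hdp.trans (dotProduct_comm _ _)]
    rw [hC_def, ← Matrix.mulVec_mulVec, dotProduct_mulVec, ← Matrix.star_mulVec, hMfc]
    show ∑ x : G, star ((fun x => ((A x : ℝ) : ℂ)) x) * ((A x : ℝ) : ℂ) = _
    push_cast
    refine Finset.sum_congr rfl (fun x _ => ?_)
    rw [RCLike.star_def, Complex.conj_ofReal]
    ring
  have hkeyQ : ∑ x : G, A x ^ 2 ≤ N * S / D * S := by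
    have h9 := hQle
    rw [hQ, Complex.ofReal_re] at h9
    exact h9
  -- final assembly
  have hCS : (∑ x : G, |A x|)^2 ≤ (N:ℝ) * ∑ x : G, A x ^ 2 := by
    have h := Finset.sum_mul_sq_le_sq_mul_sq Finset.univ (fun _ : G => (1:ℝ)) (fun x => |A x|)
    simpa [Finset.card_univ, sq_abs, hN_def, one_mul, one_pow] using h
  have hsqrtD : 0 < Real.sqrt D := Real.sqrt_pos.mpr hDR
  have habs : ∑ x : G, |A x| ≤ N * S / Real.sqrt D := by
    have h1 : (∑ x : G, |A x|)^2 ≤ (N:ℝ) * (N * S / D * S) :=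
      le_trans hCS (mul_le_mul_of_nonneg_left hkeyQ hNR.le)
    have h2 : (N:ℝ) * (N * S / D * S) = (N * S / Real.sqrt D)^2 := by
      rw [div_pow, mul_pow, Real.sq_sqrt hDR.le]
      field_simp
    rw [h2] at h1
    have h3 : (0:ℝ) ≤ N * S / Real.sqrt D := by positivity
    nlinarith [Finset.sum_nonneg (fun x (_ : x ∈ Finset.univ) => abs_nonneg (A x)), h1, h3]
  show (1 / (N:ℝ)) * ∑ x : G, |(1 / (N:ℝ)) * A x| ≤ S / (Real.sqrt D * N)
  have hLHS : ∑ x : G, |(1 / (N:ℝ)) * A x| = (1/(N:ℝ)) * ∑ x : G, |A x| := by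
    rw [Finset.mul_sum]
    refine Finset.sum_congr rfl (fun x _ => ?_)
    rw [abs_mul, abs_of_nonneg (by positivity : (0:ℝ) ≤ 1/(N:ℝ))]
  rw [hLHS]
  calc (1/(N:ℝ)) * ((1/(N:ℝ)) * ∑ x : G, |A x|)
      ≤ (1/(N:ℝ)) * ((1/(N:ℝ)) * (N * S / Real.sqrt D)) := by
        apply mul_le_mul_of_nonneg_left _ (by positivity)
        exact mul_le_mul_of_nonneg_left habs (by positivity)
    _ = S / (Real.sqrt D * N) := by
        rw [eq_div_iff (by positivity : Real.sqrt (D:ℝ) * (N:ℝ) ≠ 0)]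
        field_simp

end Main

theorem stmt4 {G : Type} [Group G] [Fintype G] (D : ℕ) (hD : 0 < D)
    (hq : IsQuasirandom G D) (f : G → ℝ) (hmean : ∑ x : G, f x = 0) :
    (1 / (Fintype.card G : ℝ)) *
        ∑ x : G, |(1 / (Fintype.card G : ℝ)) * ∑ y : G, f y * f (y * x)| ≤
      (∑ x : G, f x ^ 2) / (Real.sqrt D * (Fintype.card G : ℝ)) :=
  stmt4' D hD hq f hmean
end
end

section
/- First Cauchy–Schwarz step: Let G be a finite group and f₁, f₂, f₃ : G → ℝ with ‖f₂‖_∞ ≤ 1, and Λ(f₁,f₂,f₃) = (1/|G|²)∑_{x,y} f₁(x)f₂(xy)f₃(xy²). Then |Λ(f₁,f₂,f₃)|² ≤ (1/|G|³) ∑_{x,a,y∈G} f₁(x)f₁(xa) f₃(xy²) f₃(x y a⁻¹ y). -/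
open Matrix BigOperators Finset
open scoped Classical

noncomputable section

/-- The first Cauchy–Schwarz step in the proof of the main theorem. -/
theorem stmt15 {G : Type} [Group G] [Fintype G] (f₁ f₂ f₃ : G → ℝ)
    (h2 : ∀ x, |f₂ x| ≤ 1) :
    |(1 / (Fintype.card G : ℝ) ^ 2) *
        ∑ x : G, ∑ y : G, f₁ x * f₂ (x * y) * f₃ (x * y ^ 2)| ^ 2 ≤
      (1 / (Fintype.card G : ℝ) ^ 3) *
        ∑ x : G, ∑ a : G, ∑ y : G,
          f₁ x * f₁ (x * a) * (f₃ (x * y ^ 2) * f₃ (x * y * a⁻¹ * y)) := by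
  set N := (Fintype.card G : ℝ) with hN
  have hNpos : (0:ℝ) < N := by
    simpa [hN] using (Fintype.card_pos (α := G))
  set g : G → ℝ := fun x => ∑ y : G, f₁ (x * y⁻¹) * f₃ (x * y) with hg
  -- Step 1: change of variables x ↦ x y⁻¹
  have hstep1 : (∑ x : G, ∑ y : G, f₁ x * f₂ (x * y) * f₃ (x * y ^ 2))
      = ∑ x : G, f₂ x * g x := by
    rw [Finset.sum_comm]
    have h : ∀ y : G, (∑ x : G, f₁ x * f₂ (x * y) * f₃ (x * y ^ 2))
        = ∑ x : G, f₁ (x * y⁻¹) * f₂ x * f₃ (x * y) := by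
      intro y
      refine Fintype.sum_equiv (Equiv.mulRight y) _ _ (fun x => ?_)
      have e1 : x * y * y⁻¹ = x := by group
      have e2 : x * y ^ 2 = x * y * y := by rw [pow_two, ← mul_assoc]
      simp [Equiv.mulRight, e1, e2]
    simp_rw [h]
    rw [Finset.sum_comm]
    refine Finset.sum_congr rfl (fun x _ => ?_)
    rw [hg, Finset.mul_sum]
    exact Finset.sum_congr rfl (fun y _ => by ring)
  -- Step 3: reindexing of the square
  have hstep3 : (∑ x : G, g x ^ 2)
      = ∑ x : G, ∑ a : G, ∑ y : G,
          f₁ x * f₁ (x * a) * (f₃ (x * y ^ 2) * f₃ (x * y * a⁻¹ * y)) := by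
    have h1 : ∀ x : G, g x ^ 2 = ∑ y₁ : G, ∑ y₂ : G,
        f₁ (x * y₁⁻¹) * f₃ (x * y₁) * (f₁ (x * y₂⁻¹) * f₃ (x * y₂)) := by
      intro x; rw [sq, hg]; rw [Finset.sum_mul_sum]
    simp_rw [h1]
    have key := Fintype.sum_equiv
      (⟨fun p => (p.1 * p.2.1⁻¹, p.2.1 * p.2.2⁻¹, p.2.1),
        fun p => (p.1 * p.2.2, p.2.2, p.2.1⁻¹ * p.2.2),
        fun p => by
          obtain ⟨x, y₁, y₂⟩ := p
          simp only [Prod.mk.injEq]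
          exact ⟨by group, trivial, by group⟩,
        fun p => by
          obtain ⟨u, a, y⟩ := p
          simp only [Prod.mk.injEq]
          exact ⟨by group, by group, trivial⟩⟩ : (G × G × G) ≃ (G × G × G))
      (fun p : G × G × G =>
        f₁ (p.1 * p.2.1⁻¹) * f₃ (p.1 * p.2.1) * (f₁ (p.1 * p.2.2⁻¹) * f₃ (p.1 * p.2.2)))
      (fun p : G × G × G =>
        f₁ p.1 * f₁ (p.1 * p.2.1) * (f₃ (p.1 * p.2.2 ^ 2) * f₃ (p.1 * p.2.2 * p.2.1⁻¹ * p.2.2)))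
      (fun p => by
        obtain ⟨x, y₁, y₂⟩ := p
        simp only [Equiv.coe_fn_mk]
        have e1 : x * y₁⁻¹ * (y₁ * y₂⁻¹) = x * y₂⁻¹ := by group
        have e2 : x * y₁⁻¹ * y₁ ^ 2 = x * y₁ := by group
        have e3 : x * y₁⁻¹ * y₁ * (y₁ * y₂⁻¹)⁻¹ * y₁ = x * y₂ := by group
        rw [e1, e2, e3]; ring)
    simpa [Fintype.sum_prod_type] using key
  -- Step 2: Cauchy–Schwarz
  have hCS : (∑ x : G, f₂ x * g x) ^ 2 ≤ N * ∑ x : G, g x ^ 2 := by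
    calc (∑ x : G, f₂ x * g x) ^ 2
        ≤ (∑ x : G, f₂ x ^ 2) * ∑ x : G, g x ^ 2 :=
          Finset.sum_mul_sq_le_sq_mul_sq _ _ _
      _ ≤ N * ∑ x : G, g x ^ 2 := by
          refine mul_le_mul_of_nonneg_right ?_ (by positivity)
          calc (∑ x : G, f₂ x ^ 2) ≤ ∑ _x : G, (1:ℝ) := by
                refine Finset.sum_le_sum (fun x _ => ?_)
                have := h2 x
                nlinarith [abs_nonneg (f₂ x), sq_abs (f₂ x)]
            _ = N := by simp [hN]
  rw [hstep1, ← hstep3]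
  rw [abs_mul, mul_pow, sq_abs, sq_abs]
  have : (1 / N ^ 2) ^ 2 * (∑ x : G, f₂ x * g x) ^ 2
      ≤ (1 / N ^ 2) ^ 2 * (N * ∑ x : G, g x ^ 2) :=
    mul_le_mul_of_nonneg_left hCS (by positivity)
  calc (1 / N ^ 2) ^ 2 * (∑ x : G, f₂ x * g x) ^ 2
      ≤ (1 / N ^ 2) ^ 2 * (N * ∑ x : G, g x ^ 2) := this
    _ = (1 / N ^ 3) * ∑ x : G, g x ^ 2 := by field_simp
end
end
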